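/- arXiv:2410.13575 — 7 statements merged into one kernel-verified Lean document; each statement's English description precedes it below -/
import Mathlib

section
/- Let d be an odd prime and let O ∈ O₃(d) be a stochastic isometry that is not a permutation matrix, i.e. O ≠ P_σ for every σ ∈ S₃. Then no entry of O equals 0 and no entry of O equals 1. -/
open scoped Classical

noncomputable section

/-- `𝔽_d³` as triples over `ZMod d`. -/
abbrev F3 (d : ℕ) : Type := Fin 3 → ZMod d

/-- `𝔽_d⁶`, whose elements are written as pairs `(x; y)` with `x, y ∈ 𝔽_d³`. -/
abbrev V6 (d : ℕ) : Type := (Fin 3 → ZMod d) × (Fin 3 → ZMod d)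

/-- The dot product `x·y = ∑ i, x i * y i` on `𝔽_d³`. -/
def dot3 {d : ℕ} (x y : F3 d) : ZMod d := ∑ i, x i * y i

/-- The all-ones vector `1₃`. -/
def one3 (d : ℕ) : F3 d := fun _ => 1

/-- A stochastic isometry: a `3×3` matrix over `𝔽_d` with `O·1₃ = 1₃` and
`(Ox)·(Ox) = x·x` for all `x`. -/
def IsStochIso {d : ℕ} (O : Matrix (Fin 3) (Fin 3) (ZMod d)) : Prop :=
  O.mulVec (one3 d) = one3 d ∧
    ∀ x : F3 d, dot3 (O.mulVec x) (O.mulVec x) = dot3 x x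

/-- The permutation matrix `P_σ` associated with `σ ∈ S₃`. -/
def permMat (d : ℕ) (σ : Equiv.Perm (Fin 3)) : Matrix (Fin 3) (Fin 3) (ZMod d) :=
  Matrix.of fun i j => if σ j = i then 1 else 0


lemma twoNeZero3 {d : ℕ} (hd : d.Prime) (hodd : Odd d) : (2 : ZMod d) ≠ 0 := by
  haveI : Fact d.Prime := ⟨hd⟩
  have h2 : ((2 : ℕ) : ZMod d) ≠ 0 := by
    rw [Ne, ZMod.natCast_eq_zero_iff]
    intro h
    have hd2 : d = 2 := (Nat.prime_dvd_prime_iff_eq hd Nat.prime_two).mp h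
    subst hd2
    exact (by norm_num : ¬ Odd 2) hodd
  simpa using h2

lemma key3 {d : ℕ} (hd : d.Prime) (hodd : Odd d) (a b c : ZMod d)
    (h1 : a + b + c = 1) (h2 : a * a + b * b + c * c = 1) (h : a = 0 ∨ a = 1) :
    (a = 1 ∧ b = 0 ∧ c = 0) ∨ (a = 0 ∧ b = 1 ∧ c = 0) ∨ (a = 0 ∧ b = 0 ∧ c = 1) := by
  haveI : Fact d.Prime := ⟨hd⟩
  have h2ne := twoNeZero3 hd hodd
  have hsym : a * b + a * c + b * c = 0 := by
    have e0 : (2 : ZMod d) * (a * b + a * c + b * c) = 0 := by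
      linear_combination (a + b + c + 1) * h1 - h2
    rcases mul_eq_zero.mp e0 with h' | h'
    · exact absurd h' h2ne
    · exact h'
  rcases h with ha | ha
  · subst ha
    have hbc : b + c = 1 := by linear_combination h1
    have hbc0 : b * c = 0 := by linear_combination hsym
    rcases mul_eq_zero.mp hbc0 with hb | hc
    · right; right; exact ⟨rfl, hb, by linear_combination hbc - hb⟩
    · right; left; exact ⟨rfl, by linear_combination hbc - hc, hc⟩
  · subst ha
    have hbc : b + c = 0 := by linear_combination h1
    have hb0 : b = 0 := mul_self_eq_zero.mp (by linear_combination (b + 1) * hbc - hsym)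
    left; exact ⟨rfl, hb0, by linear_combination hbc - hb0⟩

lemma rowBasis {d : ℕ} (hd : d.Prime) (hodd : Odd d) (v : Fin 3 → ZMod d)
    (h1 : v 0 + v 1 + v 2 = 1) (h2 : v 0 * v 0 + v 1 * v 1 + v 2 * v 2 = 1)
    (j : Fin 3) (h : v j = 0 ∨ v j = 1) :
    ∃ j₀, ∀ k, v k = if k = j₀ then 1 else 0 := by
  fin_cases j
  · rcases key3 hd hodd (v 0) (v 1) (v 2) h1 h2 h with ⟨ha,hb,hc⟩|⟨ha,hb,hc⟩|⟨ha,hb,hc⟩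
    · exact ⟨0, fun k => by fin_cases k <;> simp [ha, hb, hc]⟩
    · exact ⟨1, fun k => by fin_cases k <;> simp [ha, hb, hc]⟩
    · exact ⟨2, fun k => by fin_cases k <;> simp [ha, hb, hc]⟩
  · rcases key3 hd hodd (v 1) (v 0) (v 2) (by linear_combination h1)
      (by linear_combination h2) h with ⟨ha,hb,hc⟩|⟨ha,hb,hc⟩|⟨ha,hb,hc⟩
    · exact ⟨1, fun k => by fin_cases k <;> simp [ha, hb, hc]⟩
    · exact ⟨0, fun k => by fin_cases k <;> simp [ha, hb, hc]⟩
    · exact ⟨2, fun k => by fin_cases k <;> simp [ha, hb, hc]⟩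
  · rcases key3 hd hodd (v 2) (v 0) (v 1) (by linear_combination h1)
      (by linear_combination h2) h with ⟨ha,hb,hc⟩|⟨ha,hb,hc⟩|⟨ha,hb,hc⟩
    · exact ⟨2, fun k => by fin_cases k <;> simp [ha, hb, hc]⟩
    · exact ⟨0, fun k => by fin_cases k <;> simp [ha, hb, hc]⟩
    · exact ⟨1, fun k => by fin_cases k <;> simp [ha, hb, hc]⟩

theorem stmt3 (d : ℕ) (hd : d.Prime) (hodd : Odd d)
    (O : Matrix (Fin 3) (Fin 3) (ZMod d)) (hO : IsStochIso O)
    (hnp : ∀ σ : Equiv.Perm (Fin 3), O ≠ permMat d σ) :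
    ∀ i j, O i j ≠ 0 ∧ O i j ≠ 1 := by
  haveI : Fact d.Prime := ⟨hd⟩
  have h2ne := twoNeZero3 hd hodd
  obtain ⟨h1, h2⟩ := hO
  -- row sums are 1
  have hrow : ∀ i, O i 0 + O i 1 + O i 2 = 1 := by
    intro i
    have := congrFun h1 i
    simpa [Matrix.mulVec, dotProduct, one3, Fin.sum_univ_three] using this
  -- polarization
  have hpol : ∀ x y : F3 d, dot3 (O.mulVec x) (O.mulVec y) = dot3 x y := by
    intro x y
    have e : ∀ u v : F3 d, dot3 (u + v) (u + v) = dot3 u u + 2 * dot3 u v + dot3 v v := by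
      intro u v
      simp only [dot3, Fin.sum_univ_three, Pi.add_apply]
      ring
    have h' := h2 (x + y)
    rw [Matrix.mulVec_add, e, e, h2 x, h2 y] at h'
    have h'' : (2 : ZMod d) * dot3 (O.mulVec x) (O.mulVec y) = 2 * dot3 x y := by
      linear_combination h'
    exact mul_left_cancel₀ h2ne h''
  -- column orthonormality
  have hcol : ∀ j j', ∑ i, O i j * O i j' = if j = j' then 1 else 0 := by
    intro j j'
    have := hpol (Pi.single j 1) (Pi.single j' 1)
    rw [Matrix.mulVec_single_one, Matrix.mulVec_single_one] at this
    simp only [dot3, mul_one, Matrix.col_apply] at this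
    rw [this]
    by_cases h : j = j'
    · subst h
      simp [Pi.single_apply]
    · rw [if_neg h]
      apply Finset.sum_eq_zero
      intro k _
      rcases eq_or_ne k j with rfl | hk
      · simp [Pi.single_apply, Ne.symm h]
      · simp [Pi.single_apply, hk]
  have hOtO : O.transpose * O = 1 := by
    ext j j'
    simpa [Matrix.mul_apply, Matrix.transpose_apply, Matrix.one_apply] using hcol j j'
  have hOOt : O * O.transpose = 1 := mul_eq_one_comm.mp hOtO
  have hrowo : ∀ i i', ∑ k, O i k * O i' k = if i = i' then 1 else 0 := by
    intro i i'
    have := congrFun (congrFun hOOt i) i'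
    simpa [Matrix.mul_apply, Matrix.transpose_apply, Matrix.one_apply] using this
  have hsq : ∀ i, O i 0 * O i 0 + O i 1 * O i 1 + O i 2 * O i 2 = 1 := by
    intro i
    have := hrowo i i
    simpa [Fin.sum_univ_three] using this
  intro i j
  by_contra hcon
  rw [not_and_or, not_ne_iff, not_ne_iff] at hcon
  -- row i is a standard basis vector
  obtain ⟨j₀, hj₀⟩ := rowBasis hd hodd (fun k => O i k) (hrow i) (hsq i) j hcon
  -- every row is a standard basis vector
  have hall : ∀ i', ∃ j', ∀ k, O i' k = if k = j' then 1 else 0 := by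
    intro i'
    rcases eq_or_ne i' i with rfl | hii
    · exact ⟨j₀, hj₀⟩
    · have hz : O i' j₀ = 0 := by
        have ho := hrowo i i'
        rw [if_neg (Ne.symm hii)] at ho
        calc O i' j₀ = ∑ k, O i k * O i' k := by
              rw [Finset.sum_congr rfl (fun k _ => by rw [hj₀ k, ite_mul, one_mul, zero_mul])]
              rw [Finset.sum_ite_eq' Finset.univ j₀ (fun k => O i' k)]
              simp
          _ = 0 := ho
      exact rowBasis hd hodd (fun k => O i' k) (hrow i') (hsq i') j₀ (Or.inl hz)
  choose f hf using hall
  have hinj : Function.Injective f := by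
    intro a b hab
    by_contra hne
    have ho := hrowo a b
    rw [if_neg hne] at ho
    have : (1 : ZMod d) = 0 := by
      calc (1 : ZMod d) = ∑ k, O a k * O b k := by
            rw [Finset.sum_congr rfl (fun k _ => by rw [hf a k, hf b k, hab])]
            rw [Finset.sum_congr rfl (fun k _ => (ite_mul _ _ _ _).trans (by rw [one_mul, zero_mul]))]
            rw [Finset.sum_ite_eq' Finset.univ (f b) (fun k => if k = f b then (1 : ZMod d) else 0)]
            simp
        _ = 0 := ho
    exact one_ne_zero this
  have hbij : Function.Bijective f := Finite.injective_iff_bijective.mp hinj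
  refine hnp (Equiv.ofBijective f hbij).symm ?_
  ext a b
  rw [hf a b]
  show _ = permMat d (Equiv.ofBijective f hbij).symm a b
  unfold permMat
  rw [Matrix.of_apply]
  congr 1
  rw [eq_iff_iff]
  constructor
  · rintro rfl
    exact (Equiv.ofBijective f hbij).symm_apply_apply a
  · intro h
    have := congrArg (Equiv.ofBijective f hbij) h
    simpa [Equiv.ofBijective_apply] using this
end
end

section
/- Let d be an odd prime and let O ∈ O₃(d) be a stochastic isometry. Then: (i) 1₃ ∈ ker(O − 1) (i.e. O·1₃ = 1₃); (ii) if O ≠ 1 and det O = 1, then ker(O − 1) = span{1₃}; (iii) if det O = −1, then dim ker(O − 1) = 2; (iv) if O is not a permutation matrix, then every nonzero vector in ker(O − 1) has at least two nonzero entries. -/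
set_option linter.unreachableTactic false
set_option linter.unusedTactic false


open scoped Classical

noncomputable section

set_option linter.unusedSectionVars false

section Aux
open Matrix

variable {d : ℕ} [Fact (Nat.Prime d)]

lemma dot3_expand (x y : F3 d) : dot3 x y = x 0 * y 0 + x 1 * y 1 + x 2 * y 2 := by
  simp [dot3, Fin.sum_univ_three]

/-- the cross product `1₃ ×₃ x`. -/
def cr {d : ℕ} (x : F3 d) : F3 d := ![x 2 - x 1, x 0 - x 2, x 1 - x 0]

lemma fin3_cases : ∀ (i j k l : Fin 3), i ≠ j → i ≠ k → j ≠ k → l = i ∨ l = j ∨ l = k := by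
  decide

variable {O : Matrix (Fin 3) (Fin 3) (ZMod d)}

lemma mem_ker_iff (x : F3 d) :
    x ∈ LinearMap.ker (Matrix.mulVecLin (O - 1)) ↔ O.mulVec x = x := by
  rw [LinearMap.mem_ker, Matrix.mulVecLin_apply, Matrix.sub_mulVec, Matrix.one_mulVec,
    sub_eq_zero]

lemma polarization (h2 : (2 : ZMod d) ≠ 0) (hO : IsStochIso O) (x y : F3 d) :
    dot3 (O.mulVec x) (O.mulVec y) = dot3 x y := by
  have hx := hO.2 x
  have hy := hO.2 y
  have hxy := hO.2 (x + y)
  rw [Matrix.mulVec_add] at hxy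
  refine mul_left_cancel₀ h2 ?_
  simp only [dot3_expand, Pi.add_apply] at hx hy hxy ⊢
  linear_combination hxy - hx - hy

lemma dot3_single (i j : Fin 3) :
    dot3 (Pi.single i (1 : ZMod d)) (Pi.single j 1) = if i = j then 1 else 0 := by
  fin_cases i <;> fin_cases j <;>
    simp [dot3_expand, Pi.single_apply]

lemma OtO (h2 : (2 : ZMod d) ≠ 0) (hO : IsStochIso O) : Oᵀ * O = 1 := by
  ext i j
  have h := polarization h2 hO (Pi.single i 1) (Pi.single j 1)
  rw [dot3_single] at h
  simp only [Matrix.mulVec_single_one] at h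
  rw [Matrix.mul_apply, Matrix.one_apply]
  rw [← h]
  simp [dot3, Matrix.transpose_apply]

lemma eq_one_of_fix_cols (h : ∀ j, O.mulVec (Pi.single j 1) = Pi.single j 1) : O = 1 := by
  ext i j
  have := congrFun (h j) i
  simp only [Matrix.mulVec_single, Pi.smul_apply, Matrix.col_apply, op_smul_eq_mul, mul_one] at this
  rw [this, Matrix.one_apply, Pi.single_apply]

lemma parallel (x z : F3 d) (hn : cr x ≠ 0) (h1 : dot3 z (one3 d) = 0)
    (hx : dot3 z x = 0) : ∃ c : ZMod d, z = c • cr x := by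
  have hn0 : cr x 0 = x 2 - x 1 := by simp [cr]
  have hn1 : cr x 1 = x 0 - x 2 := by simp [cr]
  have hn2 : cr x 2 = x 1 - x 0 := by simp [cr]
  rw [dot3_expand] at h1 hx
  simp only [one3, mul_one] at h1
  have m01 : z 0 * cr x 1 = z 1 * cr x 0 := by
    rw [hn0, hn1]; linear_combination hx - x 2 * h1
  have m02 : z 0 * cr x 2 = z 2 * cr x 0 := by
    rw [hn0, hn2]; linear_combination x 1 * h1 - hx
  have m12 : z 1 * cr x 2 = z 2 * cr x 1 := by
    rw [hn1, hn2]; linear_combination hx - x 0 * h1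
  have hcase : cr x 0 ≠ 0 ∨ cr x 1 ≠ 0 ∨ cr x 2 ≠ 0 := by
    by_contra hcon
    push_neg at hcon
    exact hn (funext fun i => by fin_cases i <;>
      simp [hcon.1, hcon.2.1, hcon.2.2])
  have hext : ∀ w v : F3 d, w 0 = v 0 → w 1 = v 1 → w 2 = v 2 → w = v := by
    intro w v h0 h1 h2
    funext i
    fin_cases i <;> assumption
  rcases hcase with h | h | h
  · refine ⟨z 0 * (cr x 0)⁻¹, hext _ _ ?_ ?_ ?_⟩ <;>
      simp only [Pi.smul_apply, smul_eq_mul] <;>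
      field_simp <;>
      first
        | linear_combination m01
        | linear_combination -m01
        | linear_combination m02
        | linear_combination -m02
        | linear_combination m12
        | linear_combination -m12
        | ring
  
  · refine ⟨z 1 * (cr x 1)⁻¹, hext _ _ ?_ ?_ ?_⟩ <;>
      simp only [Pi.smul_apply, smul_eq_mul] <;>
      field_simp <;>
      first
        | linear_combination m01
        | linear_combination -m01
        | linear_combination m02
        | linear_combination -m02
        | linear_combination m12
        | linear_combination -m12
        | ring
  
  · refine ⟨z 2 * (cr x 2)⁻¹, hext _ _ ?_ ?_ ?_⟩ <;>
      simp only [Pi.smul_apply, smul_eq_mul] <;>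
      field_simp <;>
      first
        | linear_combination m01
        | linear_combination -m01
        | linear_combination m02
        | linear_combination -m02
        | linear_combination m12
        | linear_combination -m12
        | ring

lemma perm_of_col (h2 : (2 : ZMod d) ≠ 0)
    (i j k : Fin 3) (hij : i ≠ j) (hik : i ≠ k) (hjk : j ≠ k)
    (hrowsum : ∀ l, O l i + O l j + O l k = 1)
    (hcolsum : ∀ m, O i m + O j m + O k m = 1)
    (hdotc : ∀ m m' : Fin 3, O i m * O i m' + O j m * O j m' + O k m * O k m'
        = if m = m' then 1 else 0)
    (hcol : ∀ l, O l i = if l = i then 1 else 0) :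
    ∃ σ : Equiv.Perm (Fin 3), O = permMat d σ := by
  have hOii : O i i = 1 := by rw [hcol i, if_pos rfl]
  have hOji : O j i = 0 := by rw [hcol j, if_neg hij.symm]
  have hOki : O k i = 0 := by rw [hcol k, if_neg hik.symm]
  have hOij : O i j = 0 := by
    have h := hdotc i j
    rw [if_neg hij] at h
    linear_combination h - O j j * hOji - O k j * hOki - O i j * hOii
  have hOik : O i k = 0 := by
    have h := hdotc i k
    rw [if_neg hik] at h
    linear_combination h - O j k * hOji - O k k * hOki - O i k * hOii
  have hOkj : O k j = 1 - O j j := by linear_combination hcolsum j - hOij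
  have hOjk : O j k = 1 - O j j := by linear_combination hrowsum j - hOji
  have hOkk : O k k = O j j := by linear_combination hrowsum k - hOki - hOkj
  have hnorm := hdotc j j
  rw [if_pos rfl] at hnorm
  have haa : O j j * (O j j - 1) = 0 := by
    have h2a : (2 : ZMod d) * (O j j * (O j j - 1)) = 0 := by
      linear_combination hnorm - O i j * hOij - (O k j + 1 - O j j) * hOkj
    exact (mul_eq_zero.1 h2a).resolve_left h2
  rcases mul_eq_zero.1 haa with h0 | h1
  · refine ⟨Equiv.swap j k, ?_⟩
    have hsi : Equiv.swap j k i = i := Equiv.swap_apply_of_ne_of_ne hij hik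
    have hsj : Equiv.swap j k j = k := Equiv.swap_apply_left j k
    have hsk : Equiv.swap j k k = j := Equiv.swap_apply_right j k
    ext l m
    have hl := fin3_cases i j k l hij hik hjk
    have hm := fin3_cases i j k m hij hik hjk
    rcases hl with rfl | rfl | rfl <;>
      rcases hm with rfl | rfl | rfl <;>
      simp only [permMat, Matrix.of_apply, hsi, hsj, hsk, eq_self_iff_true, if_true] <;>
      first
        | exact hOii
        | linear_combination hOkj - h0
        | linear_combination hOjk - h0
        | (rw [if_neg hij]; exact hOji)
        | (rw [if_neg hik]; exact hOki)
        | (rw [if_neg hik.symm]; exact hOij)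
        | (rw [if_neg hjk.symm]; exact h0)
        | (rw [if_neg hij.symm]; exact hOik)
        | (rw [if_neg hjk]; linear_combination hOkk + h0)
  · have h1' : O j j = 1 := by linear_combination h1
    refine ⟨1, ?_⟩
    ext l m
    have hl := fin3_cases i j k l hij hik hjk
    have hm := fin3_cases i j k m hij hik hjk
    rcases hl with rfl | rfl | rfl <;>
      rcases hm with rfl | rfl | rfl <;>
      simp only [permMat, Matrix.of_apply, Equiv.Perm.one_apply, eq_self_iff_true,
        if_true] <;>
      first
        | exact hOii
        | exact h1'
        | linear_combination hOkk + h1'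
        | (simp only [hij, ↓reduceIte]; exact hOji)
        | (simp only [hik, ↓reduceIte]; exact hOki)
        | (simp only [hij.symm, ↓reduceIte]; exact hOij)
        | (simp only [hjk, ↓reduceIte]; linear_combination hOkj - h1')
        | (simp only [hik.symm, ↓reduceIte]; exact hOik)
        | (simp only [hjk.symm, ↓reduceIte]; linear_combination hOjk - h1')

/-- Part (ii) as a lemma. -/
lemma ker_eq_span (h2 : (2 : ZMod d) ≠ 0) (hO : IsStochIso O) (hne : O ≠ 1)
    (hdet : O.det = 1) :
    LinearMap.ker (Matrix.mulVecLin (O - 1)) = Submodule.span (ZMod d) {one3 d} := by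
  have hpol := polarization h2 hO
  apply le_antisymm
  · intro x hxk
    rw [mem_ker_iff] at hxk
    by_contra hxs
    have hx1 : ¬ ∃ c : ZMod d, x = c • one3 d := by
      rintro ⟨c, hc⟩
      exact hxs ((Submodule.mem_span_singleton).2 ⟨c, hc.symm⟩)
    have hnne : cr x ≠ 0 := by
      intro h0
      apply hx1
      refine ⟨x 0, funext fun i => ?_⟩
      have e0 := congrFun h0 0
      have e1 := congrFun h0 1
      have e2 := congrFun h0 2
      simp [cr, sub_eq_zero] at e0 e1 e2
      fin_cases i <;>
        simp only [Pi.smul_apply, smul_eq_mul, one3, mul_one]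
      exacts [rfl, e2, e1.symm]
    have hn_one : dot3 (cr x) (one3 d) = 0 := by
      rw [dot3_expand]
      simp [cr, one3]
    have hn_x : dot3 (cr x) x = 0 := by
      rw [dot3_expand]
      simp [cr]
      ring
    have hOn1 : dot3 (O.mulVec (cr x)) (one3 d) = 0 := by
      have hp := hpol (cr x) (one3 d)
      rw [hO.1] at hp
      rw [hp]; exact hn_one
    have hOnx : dot3 (O.mulVec (cr x)) x = 0 := by
      have hp := hpol (cr x) x
      rw [hxk] at hp
      rw [hp]; exact hn_x
    obtain ⟨c, hc⟩ := parallel x (O.mulVec (cr x)) hnne hOn1 hOnx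
    -- pointwise facts
    have hrow : ∀ i, O i 0 + O i 1 + O i 2 = 1 := by
      intro i
      have := congrFun hO.1 i
      simpa [Matrix.mulVec, dotProduct, Fin.sum_univ_three, one3] using this
    have hxp : ∀ i, O i 0 * x 0 + O i 1 * x 1 + O i 2 * x 2 = x i := by
      intro i
      have := congrFun hxk i
      simpa [Matrix.mulVec, dotProduct, Fin.sum_univ_three] using this
    have hcp : ∀ i, O i 0 * cr x 0 + O i 1 * cr x 1 + O i 2 * cr x 2 = c * cr x i := by
      intro i
      have := congrFun hc i
      simpa [Matrix.mulVec, dotProduct, Fin.sum_univ_three] using this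
    by_cases hnn : dot3 (cr x) (cr x) = 0
    · -- degenerate case
      have hfix : ∀ y : F3 d, ∃ g : ZMod d, O.mulVec y = y + g • cr x := by
        intro y
        have h1' : dot3 (O.mulVec y - y) (one3 d) = 0 := by
          have hp := hpol y (one3 d)
          rw [hO.1] at hp
          simp only [dot3_expand, Pi.sub_apply] at hp ⊢
          linear_combination hp
        have hx' : dot3 (O.mulVec y - y) x = 0 := by
          have hp := hpol y x
          rw [hxk] at hp
          simp only [dot3_expand, Pi.sub_apply] at hp ⊢
          linear_combination hp
        obtain ⟨g, hg⟩ := parallel x _ hnne h1' hx'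
        exact ⟨g, sub_eq_iff_eq_add'.1 hg⟩
      have hz : ∃ j : Fin 3, O.mulVec (Pi.single j 1) ≠ Pi.single j 1 := by
        by_contra hall
        push_neg at hall
        exact hne (eq_one_of_fix_cols hall)
      obtain ⟨j, hj⟩ := hz
      obtain ⟨g0, hg0⟩ := hfix (Pi.single j 1)
      have hg0ne : g0 ≠ 0 := by
        intro h
        apply hj
        rw [hg0, h]
        simp
      have hz0n : dot3 (Pi.single j 1) (cr x) = 0 := by
        have hiso := hO.2 (Pi.single j 1)
        rw [hg0] at hiso
        have h2g : (2 : ZMod d) * (g0 * dot3 (Pi.single j 1) (cr x)) = 0 := by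
          simp only [dot3_expand, Pi.add_apply, Pi.smul_apply, smul_eq_mul] at hiso hnn ⊢
          linear_combination hiso - g0 * g0 * hnn
        have hmz := mul_left_cancel₀ h2 (by rw [h2g, mul_zero] :
          (2 : ZMod d) * (g0 * dot3 (Pi.single j 1) (cr x)) = 2 * 0)
        exact (mul_eq_zero.1 hmz).resolve_left hg0ne
      have hnm : ∃ m, cr x m ≠ 0 := by
        by_contra hall
        push_neg at hall
        exact hnne (funext hall)
      obtain ⟨m, hm⟩ := hnm
      obtain ⟨g1, hg1⟩ := hfix (Pi.single m 1)
      have hfinal := hpol (Pi.single m 1) (Pi.single j 1)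
      rw [hg1, hg0] at hfinal
      have hkey : g0 * dot3 (Pi.single m 1) (cr x) = 0 := by
        simp only [dot3_expand, Pi.add_apply, Pi.smul_apply, smul_eq_mul] at hfinal hnn hz0n ⊢
        linear_combination hfinal - g1 * hz0n - g1 * g0 * hnn
      have hsl : dot3 (Pi.single m 1) (cr x) = cr x m := by
        fin_cases m <;> simp [dot3_expand, Pi.single_apply]
      rw [hsl] at hkey
      exact hm ((mul_eq_zero.1 hkey).resolve_left hg0ne)
    · -- nondegenerate case: build the basis matrix
      set B : Matrix (Fin 3) (Fin 3) (ZMod d) :=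
        Matrix.of ![![1, x 0, cr x 0], ![1, x 1, cr x 1], ![1, x 2, cr x 2]] with hBdef
      set D : Matrix (Fin 3) (Fin 3) (ZMod d) :=
        Matrix.of ![![1, 0, 0], ![0, 1, 0], ![0, 0, c]] with hDdef
      have hdetB : B.det = dot3 (cr x) (cr x) := by
        rw [dot3_expand, Matrix.det_fin_three]
        simp [hBdef, cr, Matrix.vecHead, Matrix.vecTail]
        ring
      have hdetD : D.det = c := by
        rw [Matrix.det_fin_three]
        simp [hDdef, Matrix.vecHead, Matrix.vecTail]
      have hD : O * B = B * D := by
        ext i j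
        rw [Matrix.mul_apply, Matrix.mul_apply]
        fin_cases i <;> fin_cases j <;>
          simp [hBdef, hDdef, Fin.sum_univ_three, Matrix.vecHead, Matrix.vecTail] <;>
          first
            | linear_combination hrow 0
            | linear_combination hrow 1
            | linear_combination hrow 2
            | linear_combination hxp 0
            | linear_combination hxp 1
            | linear_combination hxp 2
            | linear_combination hcp 0
            | linear_combination hcp 1
            | linear_combination hcp 2
      have hdB : B.det ≠ 0 := by rw [hdetB]; exact hnn
      have hdets := congrArg Matrix.det hD
      rw [Matrix.det_mul, Matrix.det_mul, hdet, hdetD, one_mul] at hdets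
      have hc1 : c = 1 := by
        have := mul_left_cancel₀ hdB (by linear_combination -hdets :
          B.det * c = B.det * 1)
        exact this
      have hDone : D = 1 := by
        ext i j
        fin_cases i <;> fin_cases j <;>
          simp [hDdef, Matrix.one_apply, hc1, Matrix.vecHead, Matrix.vecTail]
      have hBone : O * B = B := by
        rw [hD, hDone, mul_one]
      have hBunit : IsUnit B.det := Ne.isUnit hdB
      apply hne
      calc O = O * (B * B⁻¹) := by rw [Matrix.mul_nonsing_inv B hBunit, mul_one]
        _ = O * B * B⁻¹ := by rw [Matrix.mul_assoc]
        _ = B * B⁻¹ := by rw [hBone]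
        _ = 1 := Matrix.mul_nonsing_inv B hBunit
  · rw [Submodule.span_le, Set.singleton_subset_iff]
    exact (mem_ker_iff _).2 hO.1

end Aux

section Main
open Matrix

theorem stmt4 (d : ℕ) (hd : d.Prime) (hodd : Odd d)
    (O : Matrix (Fin 3) (Fin 3) (ZMod d)) (hO : IsStochIso O) :
    one3 d ∈ LinearMap.ker (Matrix.mulVecLin (O - 1)) ∧
    (O ≠ 1 → O.det = 1 →
      LinearMap.ker (Matrix.mulVecLin (O - 1)) = Submodule.span (ZMod d) {one3 d}) ∧
    (O.det = -1 →
      Module.finrank (ZMod d) ↥(LinearMap.ker (Matrix.mulVecLin (O - 1))) = 2) ∧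
    ((∀ σ : Equiv.Perm (Fin 3), O ≠ permMat d σ) →
      ∀ x ∈ LinearMap.ker (Matrix.mulVecLin (O - 1)), x ≠ 0 →
        2 ≤ (Finset.univ.filter fun i => x i ≠ 0).card) := by
  haveI : Fact d.Prime := ⟨hd⟩
  have h2 : (2 : ZMod d) ≠ 0 := by
    intro h
    have : (d : ℕ) ∣ 2 := by
      have := (ZMod.natCast_eq_zero_iff 2 d).1 (by exact_mod_cast h)
      exact this
    have hle := Nat.le_of_dvd (by norm_num) this
    have hd2 : d = 2 := le_antisymm hle hd.two_le
    rcases hodd with ⟨k, hk⟩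
    omega
  have hpol := polarization h2 hO
  have hOO := OtO h2 hO
  have hOt1 : Oᵀ.mulVec (one3 d) = one3 d := by
    calc Oᵀ.mulVec (one3 d) = Oᵀ.mulVec (O.mulVec (one3 d)) := by rw [hO.1]
      _ = (Oᵀ * O).mulVec (one3 d) := Matrix.mulVec_mulVec _ _ _
      _ = one3 d := by rw [hOO, Matrix.one_mulVec]
  have hcolsum : ∀ j, O 0 j + O 1 j + O 2 j = 1 := by
    intro j
    have := congrFun hOt1 j
    simpa [Matrix.mulVec, dotProduct, Fin.sum_univ_three, one3,
      Matrix.transpose_apply] using this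
  have hrowsum : ∀ i, O i 0 + O i 1 + O i 2 = 1 := by
    intro i
    have := congrFun hO.1 i
    simpa [Matrix.mulVec, dotProduct, Fin.sum_univ_three, one3] using this
  refine ⟨(mem_ker_iff _).2 hO.1, fun hne hdet => ker_eq_span h2 hO hne hdet, ?_, ?_⟩
  · -- part (iii)
    intro hdet
    have hdz : (O + 1).det = 0 := by
      have e1 : (Oᵀ + 1).det = (O + 1).det := by
        rw [show Oᵀ + 1 = (O + 1)ᵀ by rw [Matrix.transpose_add, Matrix.transpose_one],
          Matrix.det_transpose]
      have h1 : Oᵀ * (O + 1) = Oᵀ + 1 := by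
        rw [Matrix.mul_add, hOO, Matrix.mul_one, add_comm]
      have e2 : (Oᵀ + 1).det = O.det * (O + 1).det := by
        rw [← h1, Matrix.det_mul, Matrix.det_transpose]
      have e3 := e1.symm.trans e2
      rw [hdet] at e3
      have h22 : (2 : ZMod d) * (O + 1).det = 0 := by linear_combination e3
      exact (mul_eq_zero.1 h22).resolve_left h2
    obtain ⟨w, hw0, hww⟩ := (Matrix.exists_mulVec_eq_zero_iff).2 hdz
    rw [Matrix.add_mulVec, Matrix.one_mulVec] at hww
    have hOw : O.mulVec w = -w := eq_neg_of_add_eq_zero_left hww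
    have hOsq : O * O = 1 := by
      by_contra hsq
      have hiso2 : IsStochIso (O * O) :=
        ⟨by rw [← Matrix.mulVec_mulVec, hO.1, hO.1],
         fun y => by rw [← Matrix.mulVec_mulVec, hO.2, hO.2]⟩
      have hdet2 : (O * O).det = 1 := by rw [Matrix.det_mul, hdet]; ring
      have hker := ker_eq_span h2 hiso2 hsq hdet2
      have hwk : w ∈ LinearMap.ker (Matrix.mulVecLin (O * O - 1)) := by
        rw [mem_ker_iff, ← Matrix.mulVec_mulVec, hOw, Matrix.mulVec_neg, hOw, neg_neg]
      rw [hker] at hwk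
      obtain ⟨cw, hcw⟩ := Submodule.mem_span_singleton.1 hwk
      have hwn : w = -w := by
        rw [← hOw, ← hcw, Matrix.mulVec_smul, hO.1]
      apply hw0
      funext i
      have := congrFun hwn i
      have h2i : (2 : ZMod d) * w i = 0 := by
        simp only [Pi.neg_apply] at this
        linear_combination this
      exact (mul_eq_zero.1 h2i).resolve_left h2
    have hker_ne_top : LinearMap.ker (Matrix.mulVecLin (O - 1)) ≠ ⊤ := by
      intro htop
      have hone : O = 1 :=
        eq_one_of_fix_cols fun j => (mem_ker_iff _).1 (htop ▸ Submodule.mem_top)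
      rw [hone, Matrix.det_one] at hdet
      exact h2 (by linear_combination hdet)
    have hker_ne_span :
        LinearMap.ker (Matrix.mulVecLin (O - 1)) ≠ Submodule.span (ZMod d) {one3 d} := by
      intro hsp
      have hmem : ∀ j : Fin 3, ∃ a : ZMod d,
          a • one3 d = Pi.single j 1 + O.mulVec (Pi.single j 1) := by
        intro j
        have hm : (Pi.single j 1 + O.mulVec (Pi.single j 1)) ∈
            LinearMap.ker (Matrix.mulVecLin (O - 1)) := by
          rw [mem_ker_iff, Matrix.mulVec_add, Matrix.mulVec_mulVec, hOsq,
            Matrix.one_mulVec, add_comm]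
        rw [hsp] at hm
        exact Submodule.mem_span_singleton.1 hm
      obtain ⟨a0, ha0⟩ := hmem 0
      obtain ⟨a1, ha1⟩ := hmem 1
      obtain ⟨a2, ha2⟩ := hmem 2
      have hE : ∀ (a : ZMod d) (j : Fin 3), a • one3 d = Pi.single j 1 + O.mulVec (Pi.single j 1) →
          ∀ i, O i j = a - (if i = j then 1 else 0) := by
        intro a j ha i
        have := congrFun ha i
        simp only [Pi.smul_apply, smul_eq_mul, one3, mul_one, Pi.add_apply,
          Matrix.mulVec_single, Matrix.col_apply, op_smul_eq_mul, Pi.single_apply] at this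
        linear_combination -this
      have e00 := hE a0 0 ha0 0
      have e10 := hE a0 0 ha0 1
      have e20 := hE a0 0 ha0 2
      have e01 := hE a1 1 ha1 0
      have e11 := hE a1 1 ha1 1
      have e21 := hE a1 1 ha1 2
      have e02 := hE a2 2 ha2 0
      have e12 := hE a2 2 ha2 1
      have e22 := hE a2 2 ha2 2
      simp only [show ((0:Fin 3) = 0) = True by simp, show ((1:Fin 3) = 0) = False by simp,
        show ((2:Fin 3) = 0) = False by simp, show ((0:Fin 3) = 1) = False by simp,
        show ((1:Fin 3) = 1) = True by simp, show ((2:Fin 3) = 1) = False by simp,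
        show ((0:Fin 3) = 2) = False by simp, show ((1:Fin 3) = 2) = False by simp,
        show ((2:Fin 3) = 2) = True by simp, if_true, if_false, sub_zero]
        at e00 e10 e20 e01 e11 e21 e02 e12 e22
      have h3a0 : 3 * a0 = 2 := by linear_combination hcolsum 0 - e00 - e10 - e20
      have h3a1 : 3 * a1 = 2 := by linear_combination hcolsum 1 - e01 - e11 - e21
      have h3a2 : 3 * a2 = 2 := by linear_combination hcolsum 2 - e02 - e12 - e22
      by_cases h3 : (3 : ZMod d) = 0
      · exact h2 (by linear_combination a0 * h3 - h3a0)
      · have hb1 : a1 = a0 := mul_left_cancel₀ h3 (h3a1.trans h3a0.symm)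
        have hb2 : a2 = a0 := mul_left_cancel₀ h3 (h3a2.trans h3a0.symm)
        rw [hb1] at e01 e11 e21
        rw [hb2] at e02 e12 e22
        have hdet3 : O.det = 3 * a0 - 1 := by
          rw [Matrix.det_fin_three, e00, e01, e02, e10, e11, e12, e20, e21, e22]
          ring
        rw [hdet3] at hdet
        exact h2 (by linear_combination hdet - h3a0)
    have hle : Submodule.span (ZMod d) {one3 d} ≤
        LinearMap.ker (Matrix.mulVecLin (O - 1)) := by
      rw [Submodule.span_le, Set.singleton_subset_iff]
      exact (mem_ker_iff _).2 hO.1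
    have hone_ne : one3 d ≠ 0 := by
      intro h
      exact one_ne_zero (congrFun h 0)
    have h1r := finrank_span_singleton (K := ZMod d) hone_ne
    have hlt1 : 1 < Module.finrank (ZMod d)
        (LinearMap.ker (Matrix.mulVecLin (O - 1))) := by
      rw [← h1r]
      exact Submodule.finrank_lt_finrank_of_lt (lt_of_le_of_ne hle (Ne.symm hker_ne_span))
    have hlt2 : Module.finrank (ZMod d)
        (LinearMap.ker (Matrix.mulVecLin (O - 1))) < 3 := by
      have h3d : Module.finrank (ZMod d) (F3 d) = 3 := Module.finrank_fin_fun (ZMod d)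
      have hfl := Submodule.finrank_lt (K := ZMod d) hker_ne_top
      rw [h3d] at hfl
      exact hfl
    omega
  · -- part (iv)
    intro hperm x hxk hx0
    by_contra hcard
    push_neg at hcard
    have hex : ∃ i, x i ≠ 0 := by
      by_contra hall
      push_neg at hall
      exact hx0 (funext hall)
    obtain ⟨i, hi⟩ := hex
    have hunique : ∀ j, j ≠ i → x j = 0 := by
      intro j hj
      by_contra hxj
      have h2c : 1 < (Finset.univ.filter fun i => x i ≠ 0).card :=
        Finset.one_lt_card.2 ⟨i, by simp [hi], j, by simp [hxj], hj.symm⟩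
      omega
    rw [mem_ker_iff] at hxk
    have hxe : x = Pi.single i (x i) := by
      funext j
      rcases eq_or_ne j i with rfl | hj
      · simp
      · rw [hunique j hj, Pi.single_apply, if_neg hj]
    have hcol : ∀ k, O k i = if k = i then 1 else 0 := by
      intro k
      have h1 : O k i * x i = (if k = i then x i else 0) := by
        have hh := congrFun hxk k
        rw [hxe] at hh
        simpa [Matrix.mulVec_single, Pi.single_apply] using hh
      rcases eq_or_ne k i with rfl | hk
      · rw [if_pos rfl] at h1 ⊢
        exact mul_right_cancel₀ hi (by rw [one_mul]; exact h1)
      · rw [if_neg hk] at h1 ⊢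
        exact (mul_eq_zero.1 h1).resolve_right hi
    have hdot : ∀ m m' : Fin 3, O 0 m * O 0 m' + O 1 m * O 1 m' + O 2 m * O 2 m'
        = if m = m' then 1 else 0 := by
      intro m m'
      have := congrFun (congrFun hOO m) m'
      simpa [Matrix.mul_apply, Fin.sum_univ_three, Matrix.one_apply,
        Matrix.transpose_apply] using this
    have hres : ∃ σ : Equiv.Perm (Fin 3), O = permMat d σ := by
      fin_cases i
      · exact perm_of_col h2 0 1 2 (by decide) (by decide) (by decide)
          (fun l => by linear_combination hrowsum l)
          (fun m => by linear_combination hcolsum m)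
          (fun m m' => by linear_combination hdot m m') hcol
      · exact perm_of_col h2 1 0 2 (by decide) (by decide) (by decide)
          (fun l => by linear_combination hrowsum l)
          (fun m => by linear_combination hcolsum m)
          (fun m m' => by linear_combination hdot m m') hcol
      · exact perm_of_col h2 2 0 1 (by decide) (by decide) (by decide)
          (fun l => by linear_combination hrowsum l)
          (fun m => by linear_combination hcolsum m)
          (fun m m' => by linear_combination hdot m m') hcol
    obtain ⟨σ, hσ⟩ := hres
    exact hperm σ hσ

end Main
end
end

section
/- Let d be an odd prime. If d = 3, then span{(1,1,1)} is the unique nontrivial defect subspace of 𝔽_d³. If d ≡ 2 (mod 3), then 𝔽_d³ has no nontrivial defect subspace. If d ≡ 1 (mod 3) and ξ ∈ 𝔽_d is any element of multiplicative order 3 (which exists), then 𝔽_d³ has exactly two nontrivial defect subspaces, namely span{(1,ξ,ξ²)} and span{(1,ξ²,ξ)}, and these two subspaces are distinct. -/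
open scoped Classical

noncomputable section

/-- A defect subspace: every nonzero `x ∈ N` satisfies `x·x = 0` and `x·1₃ = 0`. -/
def IsDefectSubspace {d : ℕ} (N : Submodule (ZMod d) (F3 d)) : Prop :=
  ∀ x ∈ N, x ≠ 0 → dot3 x x = 0 ∧ dot3 x (one3 d) = 0

section Helpers

variable {K M : Type*} [Field K] [AddCommGroup M] [Module K M]

lemma span_eq_of_mem {v x : M} (hx : x ∈ Submodule.span K {v}) (hx0 : x ≠ 0) :
    Submodule.span K {v} = Submodule.span K {x} := by
  obtain ⟨c, rfl⟩ := Submodule.mem_span_singleton.mp hx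
  have hc : c ≠ 0 := by rintro rfl; simp at hx0
  exact (Submodule.span_singleton_smul_eq (IsUnit.mk0 c hc) v).symm

lemma eq_span_of_dichotomy {N : Submodule K M} {v w : M}
    (H : ∀ y ∈ N, y ≠ 0 → y ∈ Submodule.span K {v} ∨ y ∈ Submodule.span K {w})
    {x : M} (hxN : x ∈ N) (hx0 : x ≠ 0) (hxv : x ∈ Submodule.span K {v}) :
    N = Submodule.span K {v} := by
  have hsv := span_eq_of_mem hxv hx0
  apply le_antisymm
  · intro y hy
    by_cases hy0 : y = 0
    · simp [hy0]
    by_cases hyv : y ∈ Submodule.span K {v}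
    · exact hyv
    rcases H y hy hy0 with h | hyw
    · exact absurd h hyv
    exfalso
    have hxy0 : x + y ≠ 0 := by
      intro h
      have hyx : -x = y := neg_eq_of_add_eq_zero_right h
      exact hyv (hyx ▸ (Submodule.span K {v}).neg_mem hxv)
    rcases H (x + y) (N.add_mem hxN hy) hxy0 with h | h
    · have : y ∈ Submodule.span K {v} := by
        have := (Submodule.span K {v}).sub_mem h hxv
        simpa using this
      exact hyv this
    · have hxw : x ∈ Submodule.span K {w} := by
        have := (Submodule.span K {w}).sub_mem h hyw
        simpa using this
      have hsw := span_eq_of_mem hxw hx0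
      exact hyv (hsv ▸ hsw ▸ hyw)
  · rw [hsv]
    exact Submodule.span_le.mpr (by simpa using hxN)

lemma defect_classify {N : Submodule K M} {v w : M}
    (H : ∀ y ∈ N, y ≠ 0 → y ∈ Submodule.span K {v} ∨ y ∈ Submodule.span K {w})
    (hN : N ≠ ⊥) :
    N = Submodule.span K {v} ∨ N = Submodule.span K {w} := by
  obtain ⟨x, hxN, hx0⟩ := Submodule.exists_mem_ne_zero_of_ne_bot hN
  rcases H x hxN hx0 with h | h
  · exact Or.inl (eq_span_of_dichotomy H hxN hx0 h)
  · exact Or.inr (eq_span_of_dichotomy (fun y hy hy0 => (H y hy hy0).symm) hxN hx0 h)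

end Helpers

section ZModHelpers

variable {d : ℕ}

lemma mod3_one_of_root (hd : d.Prime) (hne : d ≠ 3) {ζ : ZMod d}
    (h : ζ ^ 2 + ζ + 1 = 0) : d % 3 = 1 := by
  haveI := Fact.mk hd
  have h0 : ζ ≠ 0 := by
    rintro rfl
    simp at h
  have h1 : ζ ≠ 1 := by
    rintro rfl
    have h3 : ((3 : ℕ) : ZMod d) = 0 := by push_cast; linear_combination h
    have hdvd := (ZMod.natCast_eq_zero_iff 3 d).mp h3
    exact hne ((Nat.prime_dvd_prime_iff_eq hd Nat.prime_three).mp hdvd)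
  have hcube : ζ ^ 3 = 1 := by linear_combination (ζ - 1) * h
  set u : (ZMod d)ˣ := Units.mk0 ζ h0 with hu
  have hu3 : u ^ 3 = 1 := by ext; push_cast [hu]; exact hcube
  have hdvd : orderOf u ∣ 3 := orderOf_dvd_of_pow_eq_one hu3
  have hne1 : orderOf u ≠ 1 := by
    rw [Ne, orderOf_eq_one_iff]
    intro h
    apply h1
    have := congrArg Units.val h
    simpa [hu] using this
  have ho3 : orderOf u = 3 := by
    rcases (Nat.prime_three).eq_one_or_self_of_dvd _ hdvd with h | h
    · exact absurd h hne1
    · exact h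
  have hcard : orderOf u ∣ Fintype.card (ZMod d)ˣ := orderOf_dvd_card
  rw [ho3, ZMod.card_units d] at hcard
  have hd2 := hd.two_le
  omega

lemma root_of_order3 (hd : d.Prime) {ξ : ZMod d} (hξ : orderOf ξ = 3) :
    ξ ^ 2 + ξ + 1 = 0 := by
  haveI := Fact.mk hd
  have hcube : ξ ^ 3 = 1 := by rw [← hξ]; exact pow_orderOf_eq_one ξ
  have h1 : ξ ≠ 1 := by
    rintro rfl
    simp at hξ
  have : (ξ - 1) * (ξ ^ 2 + ξ + 1) = 0 := by linear_combination hcube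
  rcases mul_eq_zero.mp this with h | h
  · exact absurd (by linear_combination h) h1
  · exact h

lemma defect_core (hd : d.Prime) (hodd : Odd d) {x : F3 d}
    (h1 : dot3 x x = 0) (h2 : dot3 x (one3 d) = 0) :
    x 0 ^ 2 + x 0 * x 1 + x 1 ^ 2 = 0 ∧ x 2 = -(x 0 + x 1) := by
  haveI := Fact.mk hd
  have h2' : (2 : ZMod d) ≠ 0 := by
    intro h
    have : ((2 : ℕ) : ZMod d) = 0 := by push_cast; exact h
    have hdvd := (ZMod.natCast_eq_zero_iff 2 d).mp this
    have hd2 := (Nat.prime_dvd_prime_iff_eq hd Nat.prime_two).mp hdvd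
    rcases hodd with ⟨k, hk⟩
    omega
  simp only [dot3, one3, Fin.sum_univ_three, mul_one] at h1 h2
  have hx2 : x 2 = -(x 0 + x 1) := by linear_combination h2
  constructor
  · have : (2 : ZMod d) * (x 0 ^ 2 + x 0 * x 1 + x 1 ^ 2) = 0 := by
      linear_combination h1 + (x 0 + x 1 - x 2) * hx2
    rcases mul_eq_zero.mp this with h | h
    · exact absurd h h2'
    · exact h
  · exact hx2

lemma span_vec_defect (a b : ZMod d) (h1 : 1 + a ^ 2 + b ^ 2 = 0)
    (h2 : 1 + a + b = 0) :
    IsDefectSubspace (Submodule.span (ZMod d) {![1, a, b]}) := by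
  intro x hx hx0
  obtain ⟨c, rfl⟩ := Submodule.mem_span_singleton.mp hx
  constructor
  · simp only [dot3, Fin.sum_univ_three, Pi.smul_apply, smul_eq_mul,
      Matrix.cons_val_zero, Matrix.cons_val_one, Matrix.head_cons,
      Matrix.cons_val_two, Matrix.tail_cons]
    linear_combination c ^ 2 * h1
  · simp only [dot3, one3, Fin.sum_univ_three, Pi.smul_apply, smul_eq_mul,
      Matrix.cons_val_zero, Matrix.cons_val_one, Matrix.head_cons,
      Matrix.cons_val_two, Matrix.tail_cons, mul_one]
    linear_combination c * h2

lemma vec_ne_zero (hd : d.Prime) (a b : ZMod d) : (![1, a, b] : F3 d) ≠ 0 := by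
  haveI := Fact.mk hd
  intro h
  have := congrFun h 0
  simp at this

end ZModHelpers

theorem stmt5 (d : ℕ) (hd : d.Prime) (hodd : Odd d) :
    (d = 3 → ∀ N : Submodule (ZMod d) (F3 d),
      (IsDefectSubspace N ∧ N ≠ ⊥) ↔ N = Submodule.span (ZMod d) {![1, 1, 1]}) ∧
    (d % 3 = 2 → ∀ N : Submodule (ZMod d) (F3 d), IsDefectSubspace N → N = ⊥) ∧
    (d % 3 = 1 →
      (∃ ξ : ZMod d, orderOf ξ = 3) ∧
      ∀ ξ : ZMod d, orderOf ξ = 3 →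
        Submodule.span (ZMod d) {![1, ξ, ξ ^ 2]} ≠ Submodule.span (ZMod d) {![1, ξ ^ 2, ξ]} ∧
        ∀ N : Submodule (ZMod d) (F3 d),
          (IsDefectSubspace N ∧ N ≠ ⊥) ↔
            (N = Submodule.span (ZMod d) {![1, ξ, ξ ^ 2]} ∨
              N = Submodule.span (ZMod d) {![1, ξ ^ 2, ξ]})) := by
  haveI := Fact.mk hd
  refine ⟨?_, ?_, ?_⟩
  · -- d = 3
    rintro rfl N
    constructor
    · rintro ⟨hN, hbot⟩
      have H : ∀ y ∈ N, y ≠ 0 → y ∈ Submodule.span (ZMod 3) {![1, 1, 1]} ∨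
          y ∈ Submodule.span (ZMod 3) {![1, 1, 1]} := by
        intro y hy hy0
        left
        obtain ⟨hq, hl⟩ := hN y hy hy0
        obtain ⟨hcore, hx2⟩ := defect_core hd hodd hq hl
        have h3 : (3 : ZMod 3) = 0 := by
          have := ZMod.natCast_self 3
          push_cast at this
          exact this
        have hsq : (y 0 - y 1) ^ 2 = 0 := by
          linear_combination hcore - y 0 * y 1 * h3
        have h01 : y 1 = y 0 := by
          have := pow_eq_zero_iff (n := 2) (by norm_num) |>.mp hsq
          linear_combination -this
        have h02 : y 2 = y 0 := by linear_combination hx2 - h01 - y 0 * h3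
        refine Submodule.mem_span_singleton.mpr ⟨y 0, ?_⟩
        funext i
        fin_cases i <;>
          simp [h01, h02]
      rcases defect_classify H hbot with h | h <;> exact h
    · rintro rfl
      have h3 : (3 : ZMod 3) = 0 := by
        have := ZMod.natCast_self 3
        push_cast at this
        exact this
      refine ⟨span_vec_defect 1 1 (by linear_combination h3) (by linear_combination h3), ?_⟩
      simpa [Submodule.span_singleton_eq_bot] using vec_ne_zero hd 1 1
  · -- d % 3 = 2
    intro hmod N hN
    rw [Submodule.eq_bot_iff]
    intro x hx
    by_contra hx0
    obtain ⟨hq, hl⟩ := hN x hx hx0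
    obtain ⟨hcore, hx2⟩ := defect_core hd hodd hq hl
    have hx00 : x 0 ≠ 0 ∨ x 1 ≠ 0 := by
      by_contra h
      push_neg at h
      apply hx0
      funext i
      fin_cases i <;> simp [h.1, h.2, hx2]
    -- produce a root of t^2+t+1
    have hroot : ∃ ζ : ZMod d, ζ ^ 2 + ζ + 1 = 0 := by
      rcases hx00 with h | h
      · refine ⟨x 1 / x 0, ?_⟩
        have heq : (x 1 / x 0) ^ 2 + (x 1 / x 0) + 1
            = (x 0 ^ 2 + x 0 * x 1 + x 1 ^ 2) / x 0 ^ 2 := by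
          field_simp
          ring
        rw [heq, hcore, zero_div]
      · refine ⟨x 0 / x 1, ?_⟩
        have heq : (x 0 / x 1) ^ 2 + (x 0 / x 1) + 1
            = (x 0 ^ 2 + x 0 * x 1 + x 1 ^ 2) / x 1 ^ 2 := by
          field_simp
        rw [heq, hcore, zero_div]
    obtain ⟨ζ, hζ⟩ := hroot
    have := mod3_one_of_root hd (by omega) hζ
    omega
  · -- d % 3 = 1
    intro hmod
    have hex : ∃ ξ : ZMod d, orderOf ξ = 3 := by
      have hdvd : 3 ∣ Fintype.card (ZMod d)ˣ := by
        rw [ZMod.card_units d]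
        have := hd.two_le
        omega
      obtain ⟨u, hu⟩ := exists_prime_orderOf_dvd_card 3 hdvd
      exact ⟨(u : ZMod d), by rw [orderOf_units]; exact hu⟩
    refine ⟨hex, ?_⟩
    intro ξ hξ
    have hroot : ξ ^ 2 + ξ + 1 = 0 := root_of_order3 hd hξ
    have hcube : ξ ^ 3 = 1 := by rw [← hξ]; exact pow_orderOf_eq_one ξ
    have hξ1 : ξ ≠ 1 := by rintro rfl; simp at hξ
    have hξ0 : ξ ≠ 0 := by rintro rfl; simp at hcube
    have hsne : Submodule.span (ZMod d) {![1, ξ, ξ ^ 2]} ≠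
        Submodule.span (ZMod d) {![1, ξ ^ 2, ξ]} := by
      intro h
      have hmem : (![1, ξ ^ 2, ξ] : F3 d) ∈ Submodule.span (ZMod d) {![1, ξ, ξ ^ 2]} := by
        rw [h]; exact Submodule.mem_span_singleton_self _
      obtain ⟨c, hc⟩ := Submodule.mem_span_singleton.mp hmem
      have hc0 := congrFun hc 0
      have hc1 := congrFun hc 1
      simp at hc0 hc1
      rw [hc0, one_mul] at hc1
      -- ξ = ξ^2
      have : ξ * (ξ - 1) = 0 := by linear_combination -hc1
      rcases mul_eq_zero.mp this with h' | h'
      · exact hξ0 h'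
      · exact hξ1 (by linear_combination h')
    refine ⟨hsne, ?_⟩
    intro N
    constructor
    · rintro ⟨hN, hbot⟩
      have H : ∀ y ∈ N, y ≠ 0 → y ∈ Submodule.span (ZMod d) {![1, ξ, ξ ^ 2]} ∨
          y ∈ Submodule.span (ZMod d) {![1, ξ ^ 2, ξ]} := by
        intro y hy hy0
        obtain ⟨hq, hl⟩ := hN y hy hy0
        obtain ⟨hcore, hx2⟩ := defect_core hd hodd hq hl
        have hfact : (y 1 - ξ * y 0) * (y 1 - ξ ^ 2 * y 0) = 0 := by
          linear_combination hcore + (y 0 ^ 2 * (ξ - 1) - y 0 * y 1) * hroot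
        rcases mul_eq_zero.mp hfact with h | h
        · left
          refine Submodule.mem_span_singleton.mpr ⟨y 0, ?_⟩
          have h1 : y 1 = ξ * y 0 := by linear_combination h
          have h2 : y 2 = ξ ^ 2 * y 0 := by
            linear_combination hx2 - h1 - y 0 * hroot
          funext i
          fin_cases i <;> simp [h1, h2] <;> ring
        · right
          refine Submodule.mem_span_singleton.mpr ⟨y 0, ?_⟩
          have h1 : y 1 = ξ ^ 2 * y 0 := by linear_combination h
          have h2 : y 2 = ξ * y 0 := by
            linear_combination hx2 - h1 - y 0 * hroot
          funext i
          fin_cases i <;> simp [h1, h2] <;> ring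
      exact defect_classify H hbot
    · rintro (rfl | rfl)
      · refine ⟨span_vec_defect ξ (ξ ^ 2) ?_ (by linear_combination hroot), ?_⟩
        · linear_combination hroot + ξ * (ξ - 1) * hroot
        · simpa [Submodule.span_singleton_eq_bot] using vec_ne_zero hd ξ (ξ ^ 2)
      · refine ⟨span_vec_defect (ξ ^ 2) ξ ?_ (by linear_combination hroot), ?_⟩
        · linear_combination hroot + ξ * (ξ - 1) * hroot
        · simpa [Submodule.span_singleton_eq_bot] using vec_ne_zero hd (ξ ^ 2) ξ
end
end

section
/- Let d be an odd prime; for a 3×3 matrix O over 𝔽_d and a subspace N ≤ 𝔽_d³ write O·N := {Ox : x ∈ N} and N·O := {Oᵀx : x ∈ N}. If d = 3 and Ñ := span{(1,1,1)}, then O·Ñ = Ñ·O = Ñ for every O ∈ O₃(d). If d ≡ 1 (mod 3), ξ ∈ 𝔽_d has multiplicative order 3, Ñ₀ := span{(1,ξ,ξ²)} and Ñ₁ := span{(1,ξ²,ξ)}, then for every O ∈ O₃(d) with det O = 1 one has O·Ñ_j = Ñ_j·O = Ñ_j for j = 0,1, and for every O ∈ O₃(d) with det O = −1 one has O·Ñ_j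 = Ñ_j·O = Ñ_{1−j} for j = 0,1. -/
open scoped Classical

noncomputable section

/-- `Ñ₀ = span{(1, ξ, ξ²)}`. -/
def N0 (d : ℕ) (ξ : ZMod d) : Submodule (ZMod d) (F3 d) :=
  Submodule.span (ZMod d) {![1, ξ, ξ ^ 2]}

/-- `Ñ₁ = span{(1, ξ², ξ)}`. -/
def N1 (d : ℕ) (ξ : ZMod d) : Submodule (ZMod d) (F3 d) :=
  Submodule.span (ZMod d) {![1, ξ ^ 2, ξ]}

section Aux
open Matrix
variable {d : ℕ}

lemma dot3_eq (x y : F3 d) : dot3 x y = dotProduct x y := rfl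

lemma dot3_smul (c e : ZMod d) (x y : F3 d) :
    dot3 (c • x) (e • y) = c * e * dot3 x y := by
  simp [dot3, Fin.sum_univ_three]; ring

lemma natc_ne (hd : d.Prime) (n : ℕ) (h : ¬ (d ∣ n)) : (n : ZMod d) ≠ 0 := by
  haveI : NeZero d := ⟨hd.ne_zero⟩
  rwa [Ne, ZMod.natCast_eq_zero_iff]

lemma two_ne (hd : d.Prime) (hodd : Odd d) : (2 : ZMod d) ≠ 0 := by
  have h := natc_ne hd 2 (by
    intro h
    have := (Nat.prime_dvd_prime_iff_eq hd Nat.prime_two).mp h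
    rw [this, Nat.odd_iff] at hodd; omega)
  simpa using h

lemma three_ne (hd : d.Prime) (hd3 : d % 3 = 1) : (3 : ZMod d) ≠ 0 := by
  have h := natc_ne hd 3 (by
    intro h
    have := (Nat.prime_dvd_prime_iff_eq hd Nat.prime_three).mp h
    omega)
  simpa using h

lemma iso_of_mul (M : Matrix (Fin 3) (Fin 3) (ZMod d)) (h : Mᵀ * M = 1) (x y : F3 d) :
    dot3 (M.mulVec x) (M.mulVec y) = dot3 x y := by
  rw [dot3_eq, dot3_eq, Matrix.dotProduct_mulVec, ← Matrix.vecMul_transpose,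
    Matrix.vecMul_vecMul, h, Matrix.vecMul_one]

lemma polarize (hd : d.Prime) (hodd : Odd d) (O : Matrix (Fin 3) (Fin 3) (ZMod d))
    (h : ∀ x : F3 d, dot3 (O.mulVec x) (O.mulVec x) = dot3 x x) (x y : F3 d) :
    dot3 (O.mulVec x) (O.mulVec y) = dot3 x y := by
  haveI : Fact d.Prime := ⟨hd⟩
  have hxy := h (x + y)
  have hx := h x
  have hy := h y
  have expand : ∀ u v : F3 d, dot3 (u + v) (u + v) = dot3 u u + 2 * dot3 u v + dot3 v v := by
    intro u v
    simp only [dot3, Fin.sum_univ_three, Pi.add_apply]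
    ring
  rw [Matrix.mulVec_add, expand, expand] at hxy
  have h2 : 2 * dot3 (O.mulVec x) (O.mulVec y) = 2 * dot3 x y := by
    rw [hx, hy] at hxy; linear_combination hxy
  exact mul_left_cancel₀ (two_ne hd hodd) h2

lemma ortho_of_iso (hd : d.Prime) (hodd : Odd d) (O : Matrix (Fin 3) (Fin 3) (ZMod d))
    (h : ∀ x : F3 d, dot3 (O.mulVec x) (O.mulVec x) = dot3 x x) : Oᵀ * O = 1 := by
  ext i j
  have := polarize hd hodd O h (Pi.single i 1) (Pi.single j 1)
  simp only [Matrix.mulVec_single, dot3, Fin.sum_univ_three] at this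
  fin_cases i <;> fin_cases j <;>
    simp_all [Matrix.mul_apply, Fin.sum_univ_three, Matrix.one_apply, Pi.single]

lemma xi_facts (hd : d.Prime) (ξ : ZMod d) (hξ : orderOf ξ = 3) :
    ξ ^ 3 = 1 ∧ ξ ≠ 1 ∧ 1 + ξ + ξ ^ 2 = 0 ∧ ξ ≠ 0 ∧ ξ ^ 2 ≠ ξ ∧ ξ ^ 2 ≠ 1 := by
  haveI : Fact d.Prime := ⟨hd⟩
  have h3 : ξ ^ 3 = 1 := by rw [← hξ]; exact pow_orderOf_eq_one ξ
  have h1 : ξ ≠ 1 := by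
    intro h; rw [h, orderOf_one] at hξ; omega
  have hsum : 1 + ξ + ξ ^ 2 = 0 := by
    have : (ξ - 1) * (1 + ξ + ξ ^ 2) = 0 := by linear_combination h3
    rcases mul_eq_zero.mp this with h | h
    · exact absurd (sub_eq_zero.mp h) h1
    · exact h
  have h0 : ξ ≠ 0 := by
    intro h; rw [h] at h3; simp at h3
  have h21 : ξ ^ 2 ≠ 1 := by
    intro h
    exact h1 (by linear_combination h3 - ξ * h)
  have h2x : ξ ^ 2 ≠ ξ := by
    intro h
    have : ξ * (ξ - 1) = 0 := by linear_combination h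
    rcases mul_eq_zero.mp this with h' | h'
    · exact h0 h'
    · exact h1 (sub_eq_zero.mp h')
  exact ⟨h3, h1, hsum, h0, h2x, h21⟩

lemma classify (hd : d.Prime) (h2 : (2 : ZMod d) ≠ 0) (ξ : ZMod d)
    (h3 : ξ ^ 3 = 1) (hsum : 1 + ξ + ξ ^ 2 = 0)
    (w : F3 d) (hw1 : dot3 w (one3 d) = 0) (hww : dot3 w w = 0) (hw0 : w ≠ 0) :
    ∃ c : ZMod d, c ≠ 0 ∧ (w = c • ![1, ξ, ξ ^ 2] ∨ w = c • ![1, ξ ^ 2, ξ]) := by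
  haveI : Fact d.Prime := ⟨hd⟩
  set a := w 0 with ha
  set b := w 1 with hb
  set e := w 2 with he
  have h1 : a + b + e = 0 := by
    have := hw1; simp only [dot3, one3, Fin.sum_univ_three, mul_one] at this; exact this
  have hq2 : a ^ 2 + b ^ 2 + e ^ 2 = 0 := by
    have := hww; simp only [dot3, Fin.sum_univ_three] at this; linear_combination this
  have hbne : b ≠ 0 := by
    intro hb0
    have he' : e = -a := by linear_combination h1 - hb0
    have : 2 * (a * a) = 0 := by linear_combination hq2 - b * hb0 - (e - a) * he'
    have ha0 : a = 0 := by
      rcases mul_eq_zero.mp this with h | h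
      · exact absurd h h2
      · rcases mul_eq_zero.mp h with h | h <;> exact h
    apply hw0
    have hwabc : w = ![a, b, e] := by funext i; fin_cases i <;> rfl
    rw [hwabc, ha0, hb0, he', ha0, neg_zero]
    funext i; fin_cases i <;> rfl
  have hq : 2 * (a ^ 2 + a * b + b ^ 2) = 0 := by
    linear_combination hq2 + (a + b - e) * h1
  have hq' : a ^ 2 + a * b + b ^ 2 = 0 := by
    rcases mul_eq_zero.mp hq with h | h
    · exact absurd h h2
    · exact h
  have hfac : (a - ξ * b) * (a - ξ ^ 2 * b) = 0 := by
    linear_combination hq' - a * b * hsum + b ^ 2 * h3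
  have hξ0 : ξ ≠ 0 := by
    intro h; rw [h] at h3; simp at h3
  have hwabc : w = ![a, b, e] := by funext i; fin_cases i <;> rfl
  rcases mul_eq_zero.mp hfac with hA | hA
  · refine ⟨ξ * b, mul_ne_zero hξ0 hbne, Or.inr ?_⟩
    rw [hwabc]
    funext i
    fin_cases i <;> simp
    · linear_combination hA
    · linear_combination (-b) * h3
    · linear_combination h1 - hA - b * hsum
  · refine ⟨ξ ^ 2 * b, mul_ne_zero (pow_ne_zero 2 hξ0) hbne, Or.inl ?_⟩
    rw [hwabc]
    funext i
    fin_cases i <;> simp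
    · linear_combination hA
    · linear_combination (-b) * h3
    · linear_combination h1 - hA - b * ξ * h3 - b * hsum

/-- The change of basis matrix with columns `1₃, v₀, v₁`. -/
def P3 (d : ℕ) (ξ : ZMod d) : Matrix (Fin 3) (Fin 3) (ZMod d) :=
  (Matrix.of ![one3 d, ![1, ξ, ξ ^ 2], ![1, ξ ^ 2, ξ]])ᵀ

lemma mul_eq_of_cols (A B : Matrix (Fin 3) (Fin 3) (ZMod d))
    (h0 : A *ᵥ Pi.single 0 1 = B *ᵥ Pi.single 0 1)
    (h1 : A *ᵥ Pi.single 1 1 = B *ᵥ Pi.single 1 1)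
    (h2 : A *ᵥ Pi.single 2 1 = B *ᵥ Pi.single 2 1) : A = B := by
  ext i j
  fin_cases j
  · simpa using congrFun h0 i
  · simpa using congrFun h1 i
  · simpa using congrFun h2 i

lemma mulVec3 (M : Matrix (Fin 3) (Fin 3) (ZMod d)) (x : F3 d) :
    M.mulVec x = fun i => M i 0 * x 0 + M i 1 * x 1 + M i 2 * x 2 := by
  funext i; simp [Matrix.mulVec, dotProduct, Fin.sum_univ_three]

lemma OP_eq (ξ a b : ZMod d) (O : Matrix (Fin 3) (Fin 3) (ZMod d))
    (h0 : O.mulVec (one3 d) = one3 d)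
    (ha : O.mulVec ![1, ξ, ξ ^ 2] = a • ![1, ξ, ξ ^ 2])
    (hb : O.mulVec ![1, ξ ^ 2, ξ] = b • ![1, ξ ^ 2, ξ]) :
    O * P3 d ξ = P3 d ξ * Matrix.of ![![1, 0, 0], ![0, a, 0], ![0, 0, b]] := by
  apply mul_eq_of_cols <;>
    rw [← Matrix.mulVec_mulVec, ← Matrix.mulVec_mulVec, Matrix.mulVec_single_one,
      Matrix.mulVec_single_one]
  · have e1 : (P3 d ξ).col 0 = one3 d := rfl
    have e2 : ((Matrix.of ![![1, 0, 0], ![0, a, 0], ![0, 0, b]] :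
        Matrix (Fin 3) (Fin 3) (ZMod d))).col 0 = ![1, 0, 0] := by
      funext k; fin_cases k <;> rfl
    rw [e1, e2, h0, mulVec3]
    funext i
    simp [P3, one3]
  · have e1 : (P3 d ξ).col 1 = ![1, ξ, ξ ^ 2] := rfl
    have e2 : ((Matrix.of ![![1, 0, 0], ![0, a, 0], ![0, 0, b]] :
        Matrix (Fin 3) (Fin 3) (ZMod d))).col 1 = ![0, a, 0] := by
      funext k; fin_cases k <;> rfl
    rw [e1, e2, ha, mulVec3]
    funext i
    simp [P3, one3, mul_comm]
  · have e1 : (P3 d ξ).col 2 = ![1, ξ ^ 2, ξ] := rfl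
    have e2 : ((Matrix.of ![![1, 0, 0], ![0, a, 0], ![0, 0, b]] :
        Matrix (Fin 3) (Fin 3) (ZMod d))).col 2 = ![0, 0, b] := by
      funext k; fin_cases k <;> rfl
    rw [e1, e2, hb, mulVec3]
    funext i
    simp [P3, one3, mul_comm]

lemma OP_eq_cross (ξ a b : ZMod d) (O : Matrix (Fin 3) (Fin 3) (ZMod d))
    (h0 : O.mulVec (one3 d) = one3 d)
    (ha : O.mulVec ![1, ξ, ξ ^ 2] = a • ![1, ξ ^ 2, ξ])
    (hb : O.mulVec ![1, ξ ^ 2, ξ] = b • ![1, ξ, ξ ^ 2]) :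
    O * P3 d ξ = P3 d ξ * Matrix.of ![![1, 0, 0], ![0, 0, b], ![0, a, 0]] := by
  apply mul_eq_of_cols <;>
    rw [← Matrix.mulVec_mulVec, ← Matrix.mulVec_mulVec, Matrix.mulVec_single_one,
      Matrix.mulVec_single_one]
  · have e1 : (P3 d ξ).col 0 = one3 d := rfl
    have e2 : ((Matrix.of ![![1, 0, 0], ![0, 0, b], ![0, a, 0]] :
        Matrix (Fin 3) (Fin 3) (ZMod d))).col 0 = ![1, 0, 0] := by
      funext k; fin_cases k <;> rfl
    rw [e1, e2, h0, mulVec3]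
    funext i
    simp [P3, one3]
  · have e1 : (P3 d ξ).col 1 = ![1, ξ, ξ ^ 2] := rfl
    have e2 : ((Matrix.of ![![1, 0, 0], ![0, 0, b], ![0, a, 0]] :
        Matrix (Fin 3) (Fin 3) (ZMod d))).col 1 = ![0, 0, a] := by
      funext k; fin_cases k <;> rfl
    rw [e1, e2, ha, mulVec3]
    funext i
    simp [P3, one3, mul_comm]
  · have e1 : (P3 d ξ).col 2 = ![1, ξ ^ 2, ξ] := rfl
    have e2 : ((Matrix.of ![![1, 0, 0], ![0, 0, b], ![0, a, 0]] :
        Matrix (Fin 3) (Fin 3) (ZMod d))).col 2 = ![0, b, 0] := by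
      funext k; fin_cases k <;> rfl
    rw [e1, e2, hb, mulVec3]
    funext i
    simp [P3, one3, mul_comm]

lemma detP3 (ξ : ZMod d) (h3 : ξ ^ 3 = 1) : (P3 d ξ).det = 3 * (ξ ^ 2 - ξ) := by
  rw [P3, Matrix.det_transpose]
  simp [Matrix.det_fin_three, Matrix.vecHead, Matrix.vecTail, one3]
  linear_combination (-ξ) * h3



lemma dichotomy (hd : d.Prime) (hodd : Odd d) (hd3 : d % 3 = 1) (ξ : ZMod d)
    (hξ : orderOf ξ = 3) (O : Matrix (Fin 3) (Fin 3) (ZMod d)) (hO : IsStochIso O) :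
    (∃ a b : ZMod d, a ≠ 0 ∧ b ≠ 0 ∧
      O.mulVec ![1, ξ, ξ ^ 2] = a • ![1, ξ, ξ ^ 2] ∧
      O.mulVec ![1, ξ ^ 2, ξ] = b • ![1, ξ ^ 2, ξ] ∧ O.det = 1) ∨
    (∃ a b : ZMod d, a ≠ 0 ∧ b ≠ 0 ∧
      O.mulVec ![1, ξ, ξ ^ 2] = a • ![1, ξ ^ 2, ξ] ∧
      O.mulVec ![1, ξ ^ 2, ξ] = b • ![1, ξ, ξ ^ 2] ∧ O.det = -1) := by
  haveI : Fact d.Prime := ⟨hd⟩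
  obtain ⟨h3, hξ1, hsum, hξ0, h2x, h21⟩ := xi_facts hd ξ hξ
  have h2 := two_ne hd hodd
  have h3ne := three_ne hd hd3
  set v0 : F3 d := ![1, ξ, ξ ^ 2] with hv0
  set v1 : F3 d := ![1, ξ ^ 2, ξ] with hv1
  have hOrtho : Oᵀ * O = 1 := ortho_of_iso hd hodd O hO.2
  have hiso := polarize hd hodd O hO.2
  have d00 : dot3 v0 v0 = 0 := by
    simp [dot3, Fin.sum_univ_three, hv0]
    linear_combination hsum + ξ * h3
  have d11 : dot3 v1 v1 = 0 := by
    simp [dot3, Fin.sum_univ_three, hv1]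
    linear_combination hsum + ξ * h3
  have d01 : dot3 v0 v1 = 3 := by
    simp [dot3, Fin.sum_univ_three, hv0, hv1]
    linear_combination 2 * h3
  have d0e : dot3 v0 (one3 d) = 0 := by
    simp [dot3, one3, Fin.sum_univ_three, hv0]
    linear_combination hsum
  have d1e : dot3 v1 (one3 d) = 0 := by
    simp [dot3, one3, Fin.sum_univ_three, hv1]
    linear_combination hsum
  have hinj : ∀ u : F3 d, O.mulVec u = 0 → u = 0 := by
    intro u hu
    have : Oᵀ.mulVec (O.mulVec u) = u := by
      rw [Matrix.mulVec_mulVec, hOrtho, Matrix.one_mulVec]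
    rw [hu, Matrix.mulVec_zero] at this
    exact this.symm
  have hv0ne : O.mulVec v0 ≠ 0 := by
    intro h
    have h0 := congrFun (hinj v0 h) 0
    simp [hv0] at h0
  have hv1ne : O.mulVec v1 ≠ 0 := by
    intro h
    have h0 := congrFun (hinj v1 h) 0
    simp [hv1] at h0
  have key : ∀ u : F3 d, dot3 u (one3 d) = 0 → dot3 u u = 0 → O.mulVec u ≠ 0 →
      ∃ c : ZMod d, c ≠ 0 ∧ (O.mulVec u = c • v0 ∨ O.mulVec u = c • v1) := by
    intro u he hu hne
    apply classify hd h2 ξ h3 hsum _ _ _ hne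
    · calc dot3 (O.mulVec u) (one3 d) = dot3 (O.mulVec u) (O.mulVec (one3 d)) := by rw [hO.1]
        _ = dot3 u (one3 d) := hiso u (one3 d)
        _ = 0 := he
    · rw [hO.2 u]; exact hu
  obtain ⟨a, hane, ha⟩ := key v0 d0e d00 hv0ne
  obtain ⟨b, hbne, hb⟩ := key v1 d1e d11 hv1ne
  have hcross : dot3 (O.mulVec v0) (O.mulVec v1) = 3 := by rw [hiso v0 v1, d01]
  have hPne : (P3 d ξ).det ≠ 0 := by
    rw [detP3 ξ h3]
    exact mul_ne_zero h3ne (sub_ne_zero.mpr h2x)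
  rcases ha with ha | ha <;> rcases hb with hb | hb
  · -- both on v0 : impossible
    exfalso
    rw [ha, hb, dot3_smul, d00] at hcross
    exact h3ne (by linear_combination -hcross)
  · -- straight case
    left
    refine ⟨a, b, hane, hbne, ha, hb, ?_⟩
    have hab : a * b = 1 := by
      rw [ha, hb, dot3_smul, d01] at hcross
      have h31 : 3 * (a * b) = 3 * 1 := by linear_combination hcross
      exact mul_left_cancel₀ h3ne h31
    have hmat := OP_eq ξ a b O hO.1 ha hb
    have hdet := congrArg Matrix.det hmat
    rw [Matrix.det_mul, Matrix.det_mul] at hdet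
    have hDdet : (Matrix.of ![![1, 0, 0], ![0, a, 0], ![0, 0, b]] :
        Matrix (Fin 3) (Fin 3) (ZMod d)).det = a * b := by
      simp [Matrix.det_fin_three]
    rw [hDdet, hab] at hdet
    have : O.det * (P3 d ξ).det = 1 * (P3 d ξ).det := by rw [hdet]; ring
    simpa using mul_right_cancel₀ hPne this
  · -- crossed case
    right
    refine ⟨a, b, hane, hbne, ha, hb, ?_⟩
    have hab : a * b = 1 := by
      rw [ha, hb, dot3_smul] at hcross
      have hd10 : dot3 v1 v0 = 3 := by
        rw [show dot3 v1 v0 = dot3 v0 v1 by simp [dot3, Fin.sum_univ_three]; ring, d01]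
      rw [hd10] at hcross
      have h31 : 3 * (a * b) = 3 * 1 := by linear_combination hcross
      exact mul_left_cancel₀ h3ne h31
    have hmat := OP_eq_cross ξ a b O hO.1 ha hb
    have hdet := congrArg Matrix.det hmat
    rw [Matrix.det_mul, Matrix.det_mul] at hdet
    have hDdet : (Matrix.of ![![1, 0, 0], ![0, 0, b], ![0, a, 0]] :
        Matrix (Fin 3) (Fin 3) (ZMod d)).det = -(a * b) := by
      simp [Matrix.det_fin_three]; ring
    rw [hDdet, hab] at hdet
    have : O.det * (P3 d ξ).det = (-1) * (P3 d ξ).det := by rw [hdet]; ring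
    simpa using mul_right_cancel₀ hPne this
  · -- both on v1 : impossible
    exfalso
    rw [ha, hb, dot3_smul, d11] at hcross
    exact h3ne (by linear_combination -hcross)


lemma trans_iso (hd : d.Prime) (hodd : Odd d) (O : Matrix (Fin 3) (Fin 3) (ZMod d))
    (hO : IsStochIso O) : IsStochIso Oᵀ := by
  have hOrtho : Oᵀ * O = 1 := ortho_of_iso hd hodd O hO.2
  have hOOt : O * Oᵀ = 1 := mul_eq_one_comm.mp hOrtho
  constructor
  · have h1 : Oᵀ.mulVec (O.mulVec (one3 d)) = one3 d := by
      rw [Matrix.mulVec_mulVec, hOrtho, Matrix.one_mulVec]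
    rwa [hO.1] at h1
  · intro x
    exact iso_of_mul Oᵀ (by rwa [Matrix.transpose_transpose]) x x

lemma map_span_single (M : Matrix (Fin 3) (Fin 3) (ZMod d)) (v : F3 d) :
    Submodule.map (Matrix.mulVecLin M) (Submodule.span (ZMod d) {v}) =
      Submodule.span (ZMod d) {M.mulVec v} := by
  rw [Submodule.map_span, Set.image_singleton, Matrix.mulVecLin_apply]

lemma span_smul_single (hd : d.Prime) (c : ZMod d) (hc : c ≠ 0) (v : F3 d) :
    Submodule.span (ZMod d) {c • v} = Submodule.span (ZMod d) {v} := by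
  haveI : Fact d.Prime := ⟨hd⟩
  exact Submodule.span_singleton_smul_eq (isUnit_iff_ne_zero.mpr hc) v

lemma half (hd : d.Prime) (hodd : Odd d) (hd3 : d % 3 = 1) (ξ : ZMod d)
    (hξ : orderOf ξ = 3) (M : Matrix (Fin 3) (Fin 3) (ZMod d)) (hM : IsStochIso M) :
    (M.det = 1 → Submodule.map (Matrix.mulVecLin M) (N0 d ξ) = N0 d ξ ∧
      Submodule.map (Matrix.mulVecLin M) (N1 d ξ) = N1 d ξ) ∧
    (M.det = -1 → Submodule.map (Matrix.mulVecLin M) (N0 d ξ) = N1 d ξ ∧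
      Submodule.map (Matrix.mulVecLin M) (N1 d ξ) = N0 d ξ) := by
  have h2 := two_ne hd hodd
  have hne : (1 : ZMod d) ≠ -1 := by
    intro h
    exact h2 (by linear_combination h)
  rcases dichotomy hd hodd hd3 ξ hξ M hM with
    ⟨a, b, hane, hbne, ha, hb, hdet⟩ | ⟨a, b, hane, hbne, ha, hb, hdet⟩
  · constructor
    · intro _
      constructor
      · rw [N0, map_span_single, ha, span_smul_single hd a hane]
      · rw [N1, map_span_single, hb, span_smul_single hd b hbne]
    · intro h
      rw [hdet] at h
      exact absurd h hne
  · constructor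
    · intro h
      rw [hdet] at h
      exact absurd h (Ne.symm hne)
    · intro _
      constructor
      · rw [N0, map_span_single, ha, span_smul_single hd a hane, N1]
      · rw [N1, map_span_single, hb, span_smul_single hd b hbne, N0]

end Aux

theorem stmt6 (d : ℕ) (hd : d.Prime) (hodd : Odd d) :
    (d = 3 → ∀ O : Matrix (Fin 3) (Fin 3) (ZMod d), IsStochIso O →
      Submodule.map (Matrix.mulVecLin O) (Submodule.span (ZMod d) {![1, 1, 1]}) =
          Submodule.span (ZMod d) {![1, 1, 1]} ∧
        Submodule.map (Matrix.mulVecLin O.transpose) (Submodule.span (ZMod d) {![1, 1, 1]}) =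
          Submodule.span (ZMod d) {![1, 1, 1]}) ∧
    (d % 3 = 1 → ∀ ξ : ZMod d, orderOf ξ = 3 →
      ∀ O : Matrix (Fin 3) (Fin 3) (ZMod d), IsStochIso O →
        (O.det = 1 →
          Submodule.map (Matrix.mulVecLin O) (N0 d ξ) = N0 d ξ ∧
          Submodule.map (Matrix.mulVecLin O.transpose) (N0 d ξ) = N0 d ξ ∧
          Submodule.map (Matrix.mulVecLin O) (N1 d ξ) = N1 d ξ ∧
          Submodule.map (Matrix.mulVecLin O.transpose) (N1 d ξ) = N1 d ξ) ∧
        (O.det = -1 →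
          Submodule.map (Matrix.mulVecLin O) (N0 d ξ) = N1 d ξ ∧
          Submodule.map (Matrix.mulVecLin O.transpose) (N0 d ξ) = N1 d ξ ∧
          Submodule.map (Matrix.mulVecLin O) (N1 d ξ) = N0 d ξ ∧
          Submodule.map (Matrix.mulVecLin O.transpose) (N1 d ξ) = N0 d ξ)) := by
  constructor
  · intro _ O hO
    have hOT := trans_iso hd hodd O hO
    have he : (![1, 1, 1] : F3 d) = one3 d := by
      funext i; fin_cases i <;> rfl
    constructor
    · rw [map_span_single, he, hO.1]
    · rw [map_span_single, he, hOT.1]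
  · intro hd3 ξ hξ O hO
    have hOT := trans_iso hd hodd O hO
    have hdT : (O.transpose).det = O.det := Matrix.det_transpose O
    obtain ⟨hOp, hOm⟩ := half hd hodd hd3 ξ hξ O hO
    obtain ⟨hTp, hTm⟩ := half hd hodd hd3 ξ hξ O.transpose hOT
    constructor
    · intro h1
      obtain ⟨a1, a2⟩ := hOp h1
      obtain ⟨b1, b2⟩ := hTp (by rw [hdT]; exact h1)
      exact ⟨a1, b1, a2, b2⟩
    · intro h1
      obtain ⟨a1, a2⟩ := hOm h1
      obtain ⟨b1, b2⟩ := hTm (by rw [hdT]; exact h1)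
      exact ⟨a1, b1, a2, b2⟩
end
end

section
/- Let d be an odd prime. If d = 3: a stochastic Lagrangian subspace T ≤ 𝔽₃⁶ satisfies T_LD ≠ {0} if and only if T ∈ {T̃₀, T̃₁}, where T̃₀ := span{((1,2,0);(1,2,0)), ((0,0,0);(1,1,1)), ((1,1,1);(0,0,0))} and T̃₁ := span{((1,2,0);(2,1,0)), ((0,0,0);(1,1,1)), ((1,1,1);(0,0,0))}; moreover T̃₀ ≠ T̃₁. If d ≡ 1 (mod 3), ξ ∈ 𝔽_d has multiplicative order 3, g₀ := (1,ξ,ξ²) and g₁ := (1,ξ²,ξ): a stochastic Lagrangian subspace T ≤ 𝔽_d⁶ satisfies T_LD ≠ {0} if and only if T = T̃_{ij} := span{(g_i; 0), (0; g_j), (1₃; 1₃)} for some i, j ∈ {0,1}; moreover the four subspaces T̃_{ij} are pairwise distinct. -/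
open scoped Classical

noncomputable section

/-- A stochastic Lagrangian subspace of `𝔽_d⁶`: an `𝔽_d`-subspace `T` with
`x·x = y·y` for all `(x; y) ∈ T`, `dim T = 3`, and `(1₃; 1₃) ∈ T`. -/
def IsSLS {d : ℕ} (T : Submodule (ZMod d) (V6 d)) : Prop :=
  (∀ p ∈ T, dot3 p.1 p.1 = dot3 p.2 p.2) ∧
    Module.finrank (ZMod d) T = 3 ∧ (one3 d, one3 d) ∈ T

/-- The two stochastic Lagrangian subspaces `T̃₀, T̃₁` (for `d = 3`). -/
def Td3 (d : ℕ) : Fin 2 → Submodule (ZMod d) (V6 d) := fun i =>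
  if i = 0 then
    Submodule.span (ZMod d)
      {(![1, 2, 0], ![1, 2, 0]), (![0, 0, 0], ![1, 1, 1]), (![1, 1, 1], ![0, 0, 0])}
  else
    Submodule.span (ZMod d)
      {(![1, 2, 0], ![2, 1, 0]), (![0, 0, 0], ![1, 1, 1]), (![1, 1, 1], ![0, 0, 0])}

/-- The four stochastic Lagrangian subspaces
`T̃_{ij} = span{(g_i; 0), (0; g_j), (1₃; 1₃)}` (for `d ≡ 1 (mod 3)`),
where `g₀ = (1, ξ, ξ²)` and `g₁ = (1, ξ², ξ)`. -/
def Td1 (d : ℕ) (ξ : ZMod d) : Fin 2 → Fin 2 → Submodule (ZMod d) (V6 d) := fun i j =>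
  Submodule.span (ZMod d)
    {((if i = 0 then ![1, ξ, ξ ^ 2] else ![1, ξ ^ 2, ξ]), (0 : F3 d)),
     ((0 : F3 d), (if j = 0 then ![1, ξ, ξ ^ 2] else ![1, ξ ^ 2, ξ])),
     (one3 d, one3 d)}


/-!
Polarization turns `x·x = y·y` on `T` into `x·x' = y·y'` for all `(x;y), (x';y') ∈ T`, so
pairing with `(1₃;1₃)` puts both components of every element in the plane `1₃^⊥`, and a
nonzero `(x;0) ∈ T` is an isotropic vector of that plane.

For `d ≡ 1 (mod 3)` these are the multiples of `g₀` and `g₁`, so `(g_i;0) ∈ T`. Pairing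
with `(g_i;0)` puts the first components of `T` in `span{1₃, g_i}`; since `dim T = 3` this
forces an element `(0;y) ≠ 0`, hence `(0;g_j) ∈ T`, and pairing with the three vectors
`(g_i;0), (0;g_j), (1₃;1₃)` pins `T` down. The four spaces are told apart by `g₀·g₁ = 3 ≠ 0`.

For `d = 3` the plane `1₃^⊥ = span{1₃, e}`, `e = (1,2,0)`, is degenerate: its only isotropic
line is `1₃`, so `(1₃;0), (0;1₃) ∈ T`, and modulo these `T` is spanned by one `(αe;βe)` with
`α² = β²`, i.e. by `(e;e)` or `(e;-e)`.
-/

open Matrix Module Submodule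

theorem fst_dotProduct_fst_eq_snd_dotProduct_snd {K ι : Type*} [Field K] [Fintype ι]
    {T : Submodule K ((ι → K) × (ι → K))} (h2 : (2 : K) ≠ 0)
    (hT : ∀ p ∈ T, p.1 ⬝ᵥ p.1 = p.2 ⬝ᵥ p.2) {p q : (ι → K) × (ι → K)} (hp : p ∈ T)
    (hq : q ∈ T) : p.1 ⬝ᵥ q.1 = p.2 ⬝ᵥ q.2 := by
  have hpq := hT _ (T.add_mem hp hq)
  simp only [Prod.fst_add, Prod.snd_add, add_dotProduct, dotProduct_add,
    dotProduct_comm q.1 p.1, dotProduct_comm q.2 p.2, hT p hp, hT q hq] at hpq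
  exact mul_left_cancel₀ h2 (by linear_combination hpq)

theorem Submodule.exists_mem_notMem_span_pair {K V : Type*} [Field K] [AddCommGroup V]
    [Module K V] [FiniteDimensional K V] {T : Submodule K V} (hT : 2 < finrank K T)
    (u w : V) : ∃ v ∈ T, v ∉ span K {u, w} := by
  by_contra! h
  have hle := Submodule.finrank_mono h
  have hspan := finrank_span_le_card (R := K) ({u, w} : Set V)
  have hcard : ({u, w} : Set V).toFinset.card ≤ 2 := by
    rw [Set.toFinset_insert, Set.toFinset_singleton]
    exact Finset.card_le_two
  omega

section CubeRoots

variable {R : Type*} [CommRing R] {ω : R}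

/-- `cubeVec ξ = g₀`, and `cubeVec (ξ²) = g₁ = (1, ξ², ξ)` because `ξ⁴ = ξ`. -/
def cubeVec (ω : R) : Fin 3 → R := ![1, ω, ω ^ 2]

def cubeRoots (ω : R) : Fin 2 → R := ![ω, ω ^ 2]

theorem one_add_cubeRoots_add_sq (hω : 1 + ω + ω ^ 2 = 0) (i : Fin 2) :
    1 + cubeRoots ω i + cubeRoots ω i ^ 2 = 0 := by
  fin_cases i
  · exact hω
  · show 1 + ω ^ 2 + (ω ^ 2) ^ 2 = 0
    linear_combination (ω ^ 2 - ω + 1) * hω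

theorem cubeVec_dotProduct_one (hω : 1 + ω + ω ^ 2 = 0) : cubeVec ω ⬝ᵥ 1 = 0 := by
  rw [dotProduct_one, Fin.sum_univ_three]
  exact hω

theorem cubeVec_dotProduct_self (hω : 1 + ω + ω ^ 2 = 0) : cubeVec ω ⬝ᵥ cubeVec ω = 0 := by
  simp only [dotProduct, cubeVec, Fin.sum_univ_three, cons_val_zero, cons_val_one, cons_val,
    mul_one]
  linear_combination (ω ^ 2 - ω + 1) * hω

theorem cubeVec_dotProduct_cubeVec_sq (hω : 1 + ω + ω ^ 2 = 0) :
    cubeVec ω ⬝ᵥ cubeVec (ω ^ 2) = 3 := by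
  simp only [dotProduct, cubeVec, Fin.sum_univ_three, cons_val_zero, cons_val_one, cons_val,
    mul_one]
  linear_combination (ω ^ 3 + 2) * (ω - 1) * hω

theorem cubeVec_cubeRoots_dotProduct (hω : 1 + ω + ω ^ 2 = 0) (i k : Fin 2) :
    cubeVec (cubeRoots ω i) ⬝ᵥ cubeVec (cubeRoots ω k) = if i = k then 0 else 3 := by
  split_ifs with h
  · exact h ▸ cubeVec_dotProduct_self (one_add_cubeRoots_add_sq hω i)
  · fin_cases i <;> fin_cases k
    · exact absurd rfl h
    · exact cubeVec_dotProduct_cubeVec_sq hω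
    · exact (dotProduct_comm _ _).trans (cubeVec_dotProduct_cubeVec_sq hω)
    · exact absurd rfl h

end CubeRoots

section CubeRootsField

variable {K : Type*} [Field K] {ω : K}

theorem eq_smul_cubeVec_or_eq_smul_cubeVec_sq (h2 : (2 : K) ≠ 0) (hω : 1 + ω + ω ^ 2 = 0)
    {v : Fin 3 → K} (h1 : v ⬝ᵥ 1 = 0) (hv : v ⬝ᵥ v = 0) :
    v = v 0 • cubeVec ω ∨ v = v 0 • cubeVec (ω ^ 2) := by
  rw [dotProduct_one, Fin.sum_univ_three] at h1
  simp only [dotProduct, Fin.sum_univ_three] at hv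
  have hfac : (v 1 - ω * v 0) * (v 1 - ω ^ 2 * v 0) = 0 := by
    refine mul_left_cancel₀ h2 ?_
    linear_combination hv + (v 0 + v 1 - v 2) * h1 + (2 * (ω - 1) * v 0 ^ 2 - 2 * v 0 * v 1) * hω
  rcases mul_eq_zero.mp hfac with h | h <;> [left; right] <;> ext i <;> fin_cases i <;>
    simp only [Fin.zero_eta, Fin.mk_one, Fin.reduceFinMk, cubeVec, Pi.smul_apply, cons_val_zero,
      cons_val_one, cons_val, smul_eq_mul, mul_one]
  · linear_combination h
  · linear_combination h1 - h - v 0 * hω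
  · linear_combination h
  · linear_combination h1 - h - v 0 * hω - (ω * v 0) * (ω - 1) * hω

theorem eq_smul_cubeVec_of_dotProduct_eq_zero (h3 : (3 : K) ≠ 0) (hω : 1 + ω + ω ^ 2 = 0)
    {v : Fin 3 → K} (h1 : v ⬝ᵥ 1 = 0) (hv : v ⬝ᵥ cubeVec ω = 0) :
    v = v 0 • cubeVec ω := by
  rw [dotProduct_one, Fin.sum_univ_three] at h1
  simp only [dotProduct, cubeVec, Fin.sum_univ_three, cons_val_zero, cons_val_one, cons_val,
    mul_one] at hv
  -- `3v = (v·1₃) 1₃ + (v·cubeVec ω²) cubeVec ω + (v·cubeVec ω) cubeVec ω²`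
  ext i
  fin_cases i <;>
    simp only [Fin.zero_eta, Fin.mk_one, Fin.reduceFinMk, cubeVec, Pi.smul_apply, cons_val_zero,
      cons_val_one, cons_val, smul_eq_mul, mul_one] <;>
    refine mul_left_cancel₀ h3 ?_
  · linear_combination (1 - ω) * h1 + (ω ^ 2 - ω) * hv
      + (-v 0 + (2 - ω) * v 1 - (1 - ω) ^ 2 * v 2) * hω
  · linear_combination (1 - ω ^ 2) * h1 + (ω - ω ^ 2) * hv
      + (-v 0 - (1 - ω) * v 1 + (ω ^ 2 - 2 * ω + 2) * v 2) * hω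

theorem exists_smul_cubeVec_of_dotProduct_self_eq_zero (h2 : (2 : K) ≠ 0)
    (hω : 1 + ω + ω ^ 2 = 0) {v : Fin 3 → K} (hv0 : v ≠ 0) (h1 : v ⬝ᵥ 1 = 0)
    (hv : v ⬝ᵥ v = 0) :
    ∃ i : Fin 2, ∃ c : K, c ≠ 0 ∧ v = c • cubeVec (cubeRoots ω i) := by
  rcases eq_smul_cubeVec_or_eq_smul_cubeVec_sq h2 hω h1 hv with h | h
  · exact ⟨0, v 0, fun hc => hv0 (by rwa [hc, zero_smul] at h), h⟩
  · exact ⟨1, v 0, fun hc => hv0 (by rwa [hc, zero_smul] at h), h⟩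

theorem exists_eq_smul_one_add_smul_cubeVec (h3 : (3 : K) ≠ 0) (hω : 1 + ω + ω ^ 2 = 0)
    {v : Fin 3 → K} (hv : v ⬝ᵥ cubeVec ω = 0) :
    ∃ c : K, v = (v ⬝ᵥ 1 / 3) • 1 + c • cubeVec ω := by
  set u := v - (v ⬝ᵥ 1 / 3) • (1 : Fin 3 → K)
  have hu1 : u ⬝ᵥ 1 = 0 := by
    have h111 : (1 : Fin 3 → K) ⬝ᵥ 1 = 3 := by simp [dotProduct_one]
    rw [sub_dotProduct, smul_dotProduct, h111, smul_eq_mul, div_mul_cancel₀ _ h3, sub_self]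
  have hug : u ⬝ᵥ cubeVec ω = 0 := by
    simp only [u, sub_dotProduct, smul_dotProduct, hv, dotProduct_comm (1 : Fin 3 → K),
      cubeVec_dotProduct_one hω, smul_zero, sub_zero]
  exact ⟨u 0, by rw [← eq_smul_cubeVec_of_dotProduct_eq_zero h3 hω hu1 hug]; simp [u]⟩

end CubeRootsField

section Lagrangian

variable {K : Type*} [Field K] {T : Submodule K ((Fin 3 → K) × (Fin 3 → K))} {ω ω' : K}

theorem cubeVec_dotProduct_eq_zero_of_mem_span (hω : 1 + ω + ω ^ 2 = 0)
    (hω' : 1 + ω' + ω' ^ 2 = 0) {p : (Fin 3 → K) × (Fin 3 → K)}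
    (hp : p ∈ span K {(cubeVec ω, 0), (0, cubeVec ω'), (1, 1)}) :
    cubeVec ω ⬝ᵥ p.1 = 0 ∧ cubeVec ω' ⬝ᵥ p.2 = 0 := by
  obtain ⟨a, b, c, rfl⟩ := mem_span_triple.1 hp
  simp [dotProduct_add, dotProduct_smul, cubeVec_dotProduct_self hω, cubeVec_dotProduct_self hω',
    cubeVec_dotProduct_one hω, cubeVec_dotProduct_one hω']

theorem eq_of_span_cubeVec_cubeRoots_eq (h3 : (3 : K) ≠ 0) (hω : 1 + ω + ω ^ 2 = 0)
    {i j k l : Fin 2}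
    (h : span K {(cubeVec (cubeRoots ω i), 0), (0, cubeVec (cubeRoots ω j)), (1, 1)} =
      span K {(cubeVec (cubeRoots ω k), 0), (0, cubeVec (cubeRoots ω l)), (1, 1)}) :
    i = k ∧ j = l := by
  have hk := cubeVec_dotProduct_eq_zero_of_mem_span (one_add_cubeRoots_add_sq hω k)
    (one_add_cubeRoots_add_sq hω l) (h ▸ subset_span (by simp) :
      ((cubeVec (cubeRoots ω i), 0) : (Fin 3 → K) × (Fin 3 → K)) ∈ _)
  have hl := cubeVec_dotProduct_eq_zero_of_mem_span (one_add_cubeRoots_add_sq hω k)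
    (one_add_cubeRoots_add_sq hω l) (h ▸ subset_span (by simp) :
      ((0, cubeVec (cubeRoots ω j)) : (Fin 3 → K) × (Fin 3 → K)) ∈ _)
  simp only [cubeVec_cubeRoots_dotProduct hω, ite_eq_left_iff, h3, imp_false, not_not] at hk hl
  exact ⟨hk.1.symm, hl.2.symm⟩

variable (hT : ∀ p ∈ T, ∀ q ∈ T, p.1 ⬝ᵥ q.1 = p.2 ⬝ᵥ q.2)
  (h11 : ((1 : Fin 3 → K), (1 : Fin 3 → K)) ∈ T)
include hT h11

theorem exists_mk_cubeVec_zero_mem (h2 : (2 : K) ≠ 0) (hω : 1 + ω + ω ^ 2 = 0)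
    {v : Fin 3 → K} (hv0 : v ≠ 0) (hv : (v, 0) ∈ T) :
    ∃ i : Fin 2, (cubeVec (cubeRoots ω i), 0) ∈ T := by
  obtain ⟨i, c, hc, rfl⟩ := exists_smul_cubeVec_of_dotProduct_self_eq_zero h2 hω hv0
    (by simpa using hT _ hv _ h11) (by simpa using hT _ hv _ hv)
  refine ⟨i, (T.smul_mem_iff hc).1 ?_⟩
  simpa using hv

theorem exists_mk_zero_cubeVec_mem (h2 : (2 : K) ≠ 0) (hω : 1 + ω + ω ^ 2 = 0)
    {v : Fin 3 → K} (hv0 : v ≠ 0) (hv : (0, v) ∈ T) :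
    ∃ j : Fin 2, (0, cubeVec (cubeRoots ω j)) ∈ T := by
  obtain ⟨j, c, hc, rfl⟩ := exists_smul_cubeVec_of_dotProduct_self_eq_zero h2 hω hv0
    (by simpa using (hT _ hv _ h11).symm) (by simpa using (hT _ hv _ hv).symm)
  refine ⟨j, (T.smul_mem_iff hc).1 ?_⟩
  simpa using hv

theorem exists_mk_zero_mem_of_mk_cubeVec_zero_mem (h3 : (3 : K) ≠ 0)
    (hω : 1 + ω + ω ^ 2 = 0) (hdim : 2 < finrank K T) (hg : (cubeVec ω, 0) ∈ T) :
    ∃ v ≠ 0, (0, v) ∈ T := by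
  obtain ⟨⟨x, y⟩, hp, hpspan⟩ := T.exists_mem_notMem_span_pair hdim (1, 1) (cubeVec ω, 0)
  obtain ⟨c, hx⟩ := exists_eq_smul_one_add_smul_cubeVec h3 hω (by simpa using hT _ hp _ hg)
  set a := x ⬝ᵥ 1 / 3
  have hmem : (0, y - a • 1) ∈ T := by
    convert T.sub_mem (T.sub_mem hp (T.smul_mem a h11)) (T.smul_mem c hg) using 1
    ext : 1 <;> simp [hx]
  refine ⟨y - a • 1, fun hy => hpspan ?_, hmem⟩
  rw [mem_span_pair]
  refine ⟨a, c, ?_⟩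
  ext : 1 <;> simp [hx, sub_eq_zero.1 hy]

theorem eq_span_cubeVec_of_mem (h3 : (3 : K) ≠ 0) (hω : 1 + ω + ω ^ 2 = 0)
    (hω' : 1 + ω' + ω' ^ 2 = 0) (hg : (cubeVec ω, 0) ∈ T) (hg' : (0, cubeVec ω') ∈ T) :
    T = span K {(cubeVec ω, 0), (0, cubeVec ω'), (1, 1)} := by
  refine le_antisymm (fun p hp => ?_) (span_le.2 ?_)
  · obtain ⟨x, y⟩ := p
    obtain ⟨c, hx⟩ := exists_eq_smul_one_add_smul_cubeVec h3 hω (by simpa using hT _ hp _ hg)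
    obtain ⟨c', hy⟩ :=
      exists_eq_smul_one_add_smul_cubeVec h3 hω' (by simpa using (hT _ hp _ hg').symm)
    have hxy : x ⬝ᵥ 1 = y ⬝ᵥ 1 := hT _ hp _ h11
    rw [hx, hy, ← hxy, mem_span_triple]
    exact ⟨c, c', x ⬝ᵥ 1 / 3, by ext : 1 <;> simp [add_comm]⟩
  · simp [Set.insert_subset_iff, hg, hg', h11]

theorem exists_eq_span_cubeVec (h2 : (2 : K) ≠ 0) (h3 : (3 : K) ≠ 0)
    (hω : 1 + ω + ω ^ 2 = 0) (hdim : 2 < finrank K T) {x : Fin 3 → K} (hx : x ≠ 0)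
    (hxT : (x, 0) ∈ T) :
    ∃ i j : Fin 2,
      T = span K {(cubeVec (cubeRoots ω i), 0), (0, cubeVec (cubeRoots ω j)), (1, 1)} := by
  obtain ⟨i, hi⟩ := exists_mk_cubeVec_zero_mem hT h11 h2 hω hx hxT
  have hωi := one_add_cubeRoots_add_sq hω i
  obtain ⟨v, hv, hvT⟩ := exists_mk_zero_mem_of_mk_cubeVec_zero_mem hT h11 h3 hωi hdim hi
  obtain ⟨j, hj⟩ := exists_mk_zero_cubeVec_mem hT h11 h2 hω hv hvT
  exact ⟨i, j, eq_span_cubeVec_of_mem hT h11 h3 hωi (one_add_cubeRoots_add_sq hω j) hi hj⟩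

end Lagrangian

namespace CharThree

variable {T : Submodule (ZMod 3) ((Fin 3 → ZMod 3) × (Fin 3 → ZMod 3))}

theorem eq_smul_one_of_dotProduct_self_eq_zero {v : Fin 3 → ZMod 3} (h1 : v ⬝ᵥ 1 = 0)
    (hv : v ⬝ᵥ v = 0) : v = v 0 • 1 := by
  -- in characteristic `3`, `ω = 1` is a root of `1 + ω + ω²`
  have hcube : cubeVec (1 : ZMod 3) = 1 := by ext i; fin_cases i <;> rfl
  have h := eq_smul_cubeVec_or_eq_smul_cubeVec_sq (ω := (1 : ZMod 3)) (by decide) (by decide)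
    h1 hv
  rwa [one_pow, or_self, hcube] at h

theorem eq_smul_one_add_smul_of_dotProduct_one_eq_zero {v : Fin 3 → ZMod 3}
    (h1 : v ⬝ᵥ 1 = 0) : v = v 2 • 1 + (v 0 - v 2) • ![1, 2, 0] := by
  rw [dotProduct_one, Fin.sum_univ_three] at h1
  have h3 : (3 : ZMod 3) = 0 := rfl
  ext i
  fin_cases i <;>
    simp only [Fin.zero_eta, Fin.mk_one, Fin.reduceFinMk, Pi.add_apply, Pi.smul_apply,
      Pi.one_apply, cons_val_zero, cons_val_one, cons_val, smul_eq_mul, mul_one, mul_zero,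
      add_zero, add_sub_cancel]
  linear_combination h1 - v 0 * h3

variable (hT : ∀ p ∈ T, ∀ q ∈ T, p.1 ⬝ᵥ q.1 = p.2 ⬝ᵥ q.2)
  (h11 : ((1 : Fin 3 → ZMod 3), (1 : Fin 3 → ZMod 3)) ∈ T)
include hT

theorem mul_eq_mul_of_mk_smul_mem {α β α' β' : ZMod 3}
    (h : (α • ![1, 2, 0], β • ![1, 2, 0]) ∈ T)
    (h' : (α' • ![1, 2, 0], β' • ![1, 2, 0]) ∈ T) : α * α' = β * β' := by
  have hαβ := hT _ h _ h'
  simp only [smul_dotProduct, dotProduct_smul, smul_eq_mul] at hαβ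
  have hee : (![1, 2, 0] : Fin 3 → ZMod 3) ⬝ᵥ ![1, 2, 0] = 2 := rfl
  rw [hee] at hαβ
  exact mul_right_cancel₀ (by decide : (2 : ZMod 3) ≠ 0) (by linear_combination hαβ)

include h11

theorem one_zero_mem_of_mk_zero_mem {x : Fin 3 → ZMod 3} (hx : x ≠ 0) (hxT : (x, 0) ∈ T) :
    (1, 0) ∈ T := by
  have hx1 := eq_smul_one_of_dotProduct_self_eq_zero (by simpa using hT _ hxT _ h11)
    (by simpa using hT _ hxT _ hxT)
  have hx0 : x 0 ≠ 0 := fun h => hx (by rw [hx1, h, zero_smul])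
  rw [hx1] at hxT
  exact (T.smul_mem_iff hx0).1 (by simpa using hxT)

theorem exists_eq_smul_add_smul_add_of_mem (h10 : (1, 0) ∈ T)
    {p : (Fin 3 → ZMod 3) × (Fin 3 → ZMod 3)} (hp : p ∈ T) :
    ∃ a b α β : ZMod 3,
      p = a • (1, 0) + b • (0, 1) + (α • ![1, 2, 0], β • ![1, 2, 0]) ∧
      (α • ![1, 2, 0], β • ![1, 2, 0]) ∈ T := by
  have h01 : (0, 1) ∈ T := by simpa using T.sub_mem h11 h10
  have hp1 := eq_smul_one_add_smul_of_dotProduct_one_eq_zero (by simpa using hT _ hp _ h10)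
  have hp2 :=
    eq_smul_one_add_smul_of_dotProduct_one_eq_zero (by simpa using (hT _ hp _ h01).symm)
  obtain ⟨a, b, α, β, rfl⟩ : ∃ a b α β : ZMod 3,
      p = a • (1, 0) + b • (0, 1) + (α • ![1, 2, 0], β • ![1, 2, 0]) :=
    ⟨_, _, _, _, Prod.ext (by simpa using hp1) (by simpa using hp2)⟩
  refine ⟨a, b, α, β, rfl, ?_⟩
  convert T.sub_mem (T.sub_mem hp (T.smul_mem a h10)) (T.smul_mem b h01) using 1
  abel

theorem exists_mk_smul_mem_of_one_zero_mem (hdim : 2 < finrank (ZMod 3) T) (h10 : (1, 0) ∈ T) :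
    ∃ i : Fin 2, (![1, 2, 0], (![1, -1] : Fin 2 → ZMod 3) i • ![1, 2, 0]) ∈ T := by
  obtain ⟨p, hp, hpspan⟩ := T.exists_mem_notMem_span_pair hdim (1, 0) (0, 1)
  obtain ⟨a, b, α, β, rfl, hr⟩ := exists_eq_smul_add_smul_add_of_mem hT h11 h10 hp
  have hsq : (β - α) * (β + α) = 0 := by
    linear_combination -mul_eq_mul_of_mk_smul_mem hT hr hr
  obtain ⟨i, hβ⟩ : ∃ i : Fin 2, β = (![1, -1] : Fin 2 → ZMod 3) i * α := by
    rcases mul_eq_zero.1 hsq with h | h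
    exacts [⟨0, show β = 1 * α by linear_combination h⟩,
      ⟨1, show β = -1 * α by linear_combination h⟩]
  have hα : α ≠ 0 := by
    rintro rfl
    apply hpspan
    rw [mem_span_pair]
    exact ⟨a, b, by simp [hβ]⟩
  refine ⟨i, (T.smul_mem_iff hα).1 ?_⟩
  convert hr using 1
  rw [hβ, Prod.smul_mk, ← smul_smul, smul_comm]

theorem eq_span_of_one_zero_mem {ε : ZMod 3} (hε : ε ^ 2 = 1) (h10 : (1, 0) ∈ T)
    (he : (![1, 2, 0], ε • ![1, 2, 0]) ∈ T) :
    T = span (ZMod 3) {(![1, 2, 0], ε • ![1, 2, 0]), (0, 1), (1, 0)} := by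
  refine le_antisymm (fun p hp => ?_) (span_le.2 ?_)
  · obtain ⟨a, b, α, β, rfl, hr⟩ := exists_eq_smul_add_smul_add_of_mem hT h11 h10 hp
    have hαβ := mul_eq_mul_of_mk_smul_mem hT hr (α' := 1) (β' := ε) (by rwa [one_smul])
    have hβ : β = ε * α := by linear_combination -ε * hαβ - β * hε
    rw [mem_span_triple]
    exact ⟨α, b, a, by rw [hβ, Prod.smul_mk, ← smul_smul, smul_comm]; abel⟩
  · simp only [Set.insert_subset_iff, Set.singleton_subset_iff, SetLike.mem_coe]
    exact ⟨he, by simpa using T.sub_mem h11 h10, h10⟩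

end CharThree

theorem Td3_eq_span (i : Fin 2) :
    Td3 3 i = span (ZMod 3)
      {(![1, 2, 0], (![1, -1] : Fin 2 → ZMod 3) i • ![1, 2, 0]), (0, 1), (1, 0)} := by
  have h0 : (![0, 0, 0] : Fin 3 → ZMod 3) = 0 := by ext i; fin_cases i <;> rfl
  have h1 : (![1, 1, 1] : Fin 3 → ZMod 3) = 1 := by ext i; fin_cases i <;> rfl
  have hneg : (-1 : ZMod 3) • (![1, 2, 0] : Fin 3 → ZMod 3) = ![2, 1, 0] := by
    ext i; fin_cases i <;> rfl
  fin_cases i <;> simp [Td3, h0, h1, hneg]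

theorem Td3_zero_ne_one : Td3 3 0 ≠ Td3 3 1 := by
  intro h
  have hmem : (![1, 2, 0], ![1, 2, 0]) ∈ Td3 3 1 := h ▸ subset_span (by simp)
  obtain ⟨a, b, c, h⟩ := mem_span_triple.1 (Td3_eq_span 1 ▸ hmem)
  revert a b c
  decide

theorem Td1_eq_span {d : ℕ} {ξ : ZMod d} (hξ : 1 + ξ + ξ ^ 2 = 0) (i j : Fin 2) :
    Td1 d ξ i j =
      span (ZMod d) {(cubeVec (cubeRoots ξ i), 0), (0, cubeVec (cubeRoots ξ j)), (1, 1)} := by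
  have h4 : (ξ ^ 2) ^ 2 = ξ := by linear_combination ξ * (ξ - 1) * hξ
  have hg (i : Fin 2) :
      (if i = 0 then ![1, ξ, ξ ^ 2] else ![1, ξ ^ 2, ξ]) = cubeVec (cubeRoots ξ i) := by
    fin_cases i <;> simp [cubeVec, cubeRoots, h4]
  simp only [Td1, hg]
  rfl

theorem one_add_add_sq_eq_zero_of_orderOf_eq_three {K : Type*} [Field K] {ξ : K}
    (h : orderOf ξ = 3) : 1 + ξ + ξ ^ 2 = 0 := by
  have h := (h ▸ IsPrimitiveRoot.orderOf ξ).geom_sum_eq_zero (by norm_num)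
  simpa [Finset.sum_range_succ] using h

theorem IsSLS.fst_dotProduct_fst_eq_snd_dotProduct_snd {d : ℕ} [Fact d.Prime]
    {T : Submodule (ZMod d) (V6 d)} (hT : IsSLS T) (h2 : (2 : ZMod d) ≠ 0) :
    ∀ p ∈ T, ∀ q ∈ T, p.1 ⬝ᵥ q.1 = p.2 ⬝ᵥ q.2 :=
  fun _ hp _ hq => _root_.fst_dotProduct_fst_eq_snd_dotProduct_snd h2 hT.1 hp hq

theorem stmt7_general (d : ℕ) (hd : d.Prime) :
    (d = 3 →
      Td3 d 0 ≠ Td3 d 1 ∧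
      ∀ T : Submodule (ZMod d) (V6 d), IsSLS T →
        ((∃ x : F3 d, x ≠ 0 ∧ (x, (0 : F3 d)) ∈ T) ↔ ∃ i : Fin 2, T = Td3 d i)) ∧
    (d % 3 = 1 → ∀ ξ : ZMod d, orderOf ξ = 3 →
      (∀ i j k l : Fin 2, Td1 d ξ i j = Td1 d ξ k l → i = k ∧ j = l) ∧
      ∀ T : Submodule (ZMod d) (V6 d), IsSLS T →
        ((∃ x : F3 d, x ≠ 0 ∧ (x, (0 : F3 d)) ∈ T) ↔ ∃ i j : Fin 2, T = Td1 d ξ i j)) := by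
  refine ⟨?_, fun hmod ξ hξ => ?_⟩
  · rintro rfl
    refine ⟨Td3_zero_ne_one, fun T hT => ⟨fun ⟨x, hx, hxT⟩ => ?_, ?_⟩⟩
    · have hpol := hT.fst_dotProduct_fst_eq_snd_dotProduct_snd (by decide)
      have h10 := CharThree.one_zero_mem_of_mk_zero_mem hpol hT.2.2 hx hxT
      obtain ⟨i, hi⟩ :=
        CharThree.exists_mk_smul_mem_of_one_zero_mem hpol hT.2.2 (by rw [hT.2.1]; norm_num) h10
      have hε : ((![1, -1] : Fin 2 → ZMod 3) i) ^ 2 = 1 := by fin_cases i <;> rfl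
      exact ⟨i, (CharThree.eq_span_of_one_zero_mem hpol hT.2.2 hε h10 hi).trans
        (Td3_eq_span i).symm⟩
    · rintro ⟨i, rfl⟩
      exact ⟨1, one_ne_zero, Td3_eq_span i ▸ subset_span (by simp)⟩
  · have := Fact.mk hd
    have h2 : (2 : ZMod d) ≠ 0 := mod_cast ZMod.prime_ne_zero d 2 (by omega)
    have h3 : (3 : ZMod d) ≠ 0 := mod_cast ZMod.prime_ne_zero d 3 (by omega)
    have hξ' := one_add_add_sq_eq_zero_of_orderOf_eq_three hξ
    refine ⟨fun i j k l h => ?_, fun T hT => ⟨fun ⟨x, hx, hxT⟩ => ?_, ?_⟩⟩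
    · rw [Td1_eq_span hξ', Td1_eq_span hξ'] at h
      exact eq_of_span_cubeVec_cubeRoots_eq h3 hξ' h
    · have hpol := hT.fst_dotProduct_fst_eq_snd_dotProduct_snd h2
      obtain ⟨i, j, h⟩ :=
        exists_eq_span_cubeVec hpol hT.2.2 h2 h3 hξ' (by rw [hT.2.1]; norm_num) hx hxT
      exact ⟨i, j, h.trans (Td1_eq_span hξ' i j).symm⟩
    · rintro ⟨i, j, rfl⟩
      refine ⟨cubeVec (cubeRoots ξ i), fun h => one_ne_zero (congrFun h 0), ?_⟩
      rw [Td1_eq_span hξ']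
      exact subset_span (by simp)

theorem stmt7 (d : ℕ) (hd : d.Prime) (hodd : Odd d) :
    (d = 3 →
      Td3 d 0 ≠ Td3 d 1 ∧
      ∀ T : Submodule (ZMod d) (V6 d), IsSLS T →
        ((∃ x : F3 d, x ≠ 0 ∧ (x, (0 : F3 d)) ∈ T) ↔ ∃ i : Fin 2, T = Td3 d i)) ∧
    (d % 3 = 1 → ∀ ξ : ZMod d, orderOf ξ = 3 →
      (∀ i j k l : Fin 2, Td1 d ξ i j = Td1 d ξ k l → i = k ∧ j = l) ∧
      ∀ T : Submodule (ZMod d) (V6 d), IsSLS T →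
        ((∃ x : F3 d, x ≠ 0 ∧ (x, (0 : F3 d)) ∈ T) ↔ ∃ i j : Fin 2, T = Td1 d ξ i j)) :=
  stmt7_general d hd
end
end

section
/- Let d be an odd prime and let u, v ∈ 𝔽_d³ be nonzero vectors with u·1₃ = v·1₃ = 0. Then (1₃;1₃) belongs to T_u ∩ T_v, to τ₁₂T_u ∩ τ₁₂T_v, and to T_u ∩ τ₁₂T_v; moreover: dim(T_u ∩ T_v) = 3 if span{u} = span{v} and dim(T_u ∩ T_v) = 1 otherwise; dim(τ₁₂T_u ∩ τ₁₂T_v) = 3 if span{u} = span{v} and = 1 otherwise; and dim(T_u ∩ τ₁₂T_v) = 2 in all cases. -/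
open scoped Classical

noncomputable section

/-- `T_v := {(x + a·v; x − a·v) : x·v = 0, a ∈ 𝔽_d}`. -/
def Tv (d : ℕ) (v : F3 d) : Submodule (ZMod d) (V6 d) where
  carrier := {p : V6 d | ∃ (x : F3 d) (a : ZMod d),
    dot3 x v = 0 ∧ p = (x + a • v, x - a • v)}
  add_mem' := by
    rintro p q ⟨x, a, hx, rfl⟩ ⟨y, b, hy, rfl⟩
    refine ⟨x + y, a + b, ?_, ?_⟩
    · have h : dot3 (x + y) v = dot3 x v + dot3 y v := by
        simp [dot3, add_mul, Finset.sum_add_distrib]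
      rw [h, hx, hy, add_zero]
    · simp only [Prod.mk_add_mk, Prod.mk.injEq]
      constructor
      · rw [add_smul]; abel
      · rw [add_smul]; abel
  zero_mem' := by
    refine ⟨0, 0, ?_, ?_⟩
    · simp [dot3]
    · simp [Prod.ext_iff]
  smul_mem' := by
    intro c p hp
    obtain ⟨x, a, hx, rfl⟩ := hp
    refine ⟨c • x, c * a, ?_, ?_⟩
    · have h : dot3 (c • x) v = c * dot3 x v := by
        simp [dot3, Finset.mul_sum, mul_assoc]
      rw [h, hx, mul_zero]
    · simp only [Prod.smul_mk, Prod.mk.injEq]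
      constructor
      · rw [smul_add, smul_smul]
      · rw [smul_sub, smul_smul]

/-- The permutation matrix `τ₁₂` exchanging the first two coordinates. -/
def tau12 (d : ℕ) : Matrix (Fin 3) (Fin 3) (ZMod d) := !![0, 1, 0; 1, 0, 0; 0, 0, 1]

/-- `τ₁₂T := {(τ₁₂x; y) : (x; y) ∈ T}`. -/
def tauT (d : ℕ) (T : Submodule (ZMod d) (V6 d)) : Submodule (ZMod d) (V6 d) :=
  Submodule.map ((Matrix.mulVecLin (tau12 d)).prodMap LinearMap.id) T

namespace StmtAux

open Submodule LinearMap Module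

variable {d : ℕ}

lemma dot3_expand (x y : F3 d) : dot3 x y = x 0 * y 0 + x 1 * y 1 + x 2 * y 2 := by
  simp [dot3, Fin.sum_univ_three]

lemma dot3_add_left (x y z : F3 d) : dot3 (x + y) z = dot3 x z + dot3 y z := by
  simp only [dot3_expand, Pi.add_apply]; ring

lemma dot3_smul_left (c : ZMod d) (x z : F3 d) : dot3 (c • x) z = c * dot3 x z := by
  simp only [dot3_expand, Pi.smul_apply, smul_eq_mul]; ring

lemma dot3_smul_right (c : ZMod d) (x z : F3 d) : dot3 x (c • z) = c * dot3 x z := by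
  simp only [dot3_expand, Pi.smul_apply, smul_eq_mul]; ring

lemma mem_Tv_def {v : F3 d} {p : V6 d} :
    p ∈ Tv d v ↔ ∃ (x : F3 d) (a : ZMod d),
      dot3 x v = 0 ∧ p = (x + a • v, x - a • v) := Iff.rfl

def swap3 (y : F3 d) : F3 d := ![y 1, y 0, y 2]

lemma tau_mulVec (y : F3 d) : (tau12 d).mulVec y = swap3 y := by
  funext i
  fin_cases i <;>
    simp [tau12, swap3, Matrix.mulVec, dotProduct, Fin.sum_univ_three]

lemma swap3_swap3 (y : F3 d) : swap3 (swap3 y) = y := by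
  funext i; fin_cases i <;> simp [swap3]

def tmap : V6 d →ₗ[ZMod d] V6 d := ((tau12 d).mulVecLin).prodMap LinearMap.id

lemma tmap_apply (p : V6 d) : tmap p = (swap3 p.1, p.2) := by
  simp [tmap, LinearMap.prodMap_apply, Matrix.mulVecLin_apply, tau_mulVec]

lemma tauT_eq (T : Submodule (ZMod d) (V6 d)) : tauT d T = T.map tmap := rfl

lemma tmap_inj : Function.Injective (tmap (d := d)) := by
  have h : ∀ p : V6 d, tmap (tmap p) = p := by
    intro p; rw [tmap_apply, tmap_apply]; simp [swap3_swap3]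
  exact Function.LeftInverse.injective h

lemma mem_tauT {T : Submodule (ZMod d) (V6 d)} {p : V6 d} :
    p ∈ tauT d T ↔ ((swap3 p.1, p.2) : V6 d) ∈ T := by
  rw [tauT_eq, Submodule.mem_map]
  constructor
  · rintro ⟨q, hq, rfl⟩
    have h : (swap3 (tmap q).1, (tmap q).2) = q := by
      rw [tmap_apply]; simp [swap3_swap3]
    rw [h]; exact hq
  · intro h
    exact ⟨(swap3 p.1, p.2), h, by rw [tmap_apply]; simp [swap3_swap3]⟩

lemma tauT_inf (A B : Submodule (ZMod d) (V6 d)) :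
    tauT d A ⊓ tauT d B = tauT d (A ⊓ B) := by
  ext p
  rw [Submodule.mem_inf, mem_tauT, mem_tauT, mem_tauT, Submodule.mem_inf]

lemma finrank_tauT (T : Submodule (ZMod d) (V6 d)) :
    Module.finrank (ZMod d) ↥(tauT d T) = Module.finrank (ZMod d) ↥T := by
  rw [tauT_eq]
  exact (LinearEquiv.finrank_eq (Submodule.equivMapOfInjective tmap tmap_inj T)).symm


section WithPrime

variable [Fact (Nat.Prime d)]

lemma mem_Tv_iff (hd2 : (2 : ZMod d) ≠ 0) {v : F3 d} {p : V6 d} :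
    p ∈ Tv d v ↔ dot3 (p.1 + p.2) v = 0 ∧ ∃ c : ZMod d, p.1 - p.2 = c • v := by
  have h21 : (2 : ZMod d)⁻¹ * 2 = 1 := inv_mul_cancel₀ hd2
  constructor
  · rintro ⟨x, a, hx, rfl⟩
    constructor
    · have h : (x + a • v) + (x - a • v) = (2 : ZMod d) • x := by
        funext i
        simp only [Pi.add_apply, Pi.sub_apply, Pi.smul_apply, smul_eq_mul]
        ring
      rw [h, dot3_smul_left, hx, mul_zero]
    · refine ⟨2 * a, ?_⟩
      funext i
      simp only [Pi.add_apply, Pi.sub_apply, Pi.smul_apply, smul_eq_mul]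
      ring
  · rintro ⟨h1, c, h2⟩
    refine ⟨(2 : ZMod d)⁻¹ • (p.1 + p.2), (2 : ZMod d)⁻¹ * c, ?_, ?_⟩
    · rw [dot3_smul_left, h1, mul_zero]
    · have e1 : p.1 = (2 : ZMod d)⁻¹ • (p.1 + p.2) + ((2 : ZMod d)⁻¹ * c) • v := by
        funext i
        have h2i : p.1 i - p.2 i = c * v i := by
          have := congrFun h2 i
          simpa using this
        simp only [Pi.add_apply, Pi.smul_apply, smul_eq_mul]
        linear_combination (2 : ZMod d)⁻¹ * h2i - (p.1 i) * h21
      have e2 : p.2 = (2 : ZMod d)⁻¹ • (p.1 + p.2) - ((2 : ZMod d)⁻¹ * c) • v := by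
        funext i
        have h2i : p.1 i - p.2 i = c * v i := by
          have := congrFun h2 i
          simpa using this
        simp only [Pi.add_apply, Pi.sub_apply, Pi.smul_apply, smul_eq_mul]
        linear_combination -(2 : ZMod d)⁻¹ * h2i - (p.2 i) * h21
      exact Prod.ext e1 e2

lemma eq3 {x y : F3 d} (h0 : x 0 = y 0) (h1 : x 1 = y 1) (h2 : x 2 = y 2) : x = y := by
  funext i; fin_cases i <;> assumption

lemma cross_span {v : F3 d} (hv : v ≠ 0) (hv1 : v 0 + v 1 + v 2 = 0)
    (w : F3 d) (hw1 : w 0 + w 1 + w 2 = 0) (hx : w 0 * v 1 - w 1 * v 0 = 0) :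
    ∃ c : ZMod d, w = c • v := by
  by_cases h0 : v 0 = 0
  · have h1 : v 1 ≠ 0 := by
      intro h1
      apply hv
      have h2 : v 2 = 0 := by linear_combination hv1 - h0 - h1
      funext i; fin_cases i <;> simpa [h0, h1]
    refine ⟨w 1 * (v 1)⁻¹, ?_⟩
    have hw0 : w 0 = 0 := by
      have hz : w 0 * v 1 = 0 := by linear_combination hx + w 1 * h0
      exact (mul_eq_zero.mp hz).resolve_right h1
    have hmul : w 2 * v 1 = w 1 * v 2 := by linear_combination v 1 * hw1 - w 1 * hv1 - hx
    refine eq3 ?_ ?_ ?_ <;> simp only [Pi.smul_apply, smul_eq_mul]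
    · rw [h0, mul_zero, hw0]
    · field_simp
    · field_simp
      linear_combination hmul
  · refine ⟨w 0 * (v 0)⁻¹, ?_⟩
    have hmul : w 2 * v 0 = w 0 * v 2 := by linear_combination v 0 * hw1 - w 0 * hv1 + hx
    refine eq3 ?_ ?_ ?_ <;> simp only [Pi.smul_apply, smul_eq_mul]
    · field_simp
    · field_simp
      linear_combination -hx
    · field_simp
      linear_combination hmul

def phi (u : F3 d) : (F3 d × ZMod d) →ₗ[ZMod d] V6 d where
  toFun p := (p.1 + p.2 • u, p.1 - p.2 • u)
  map_add' p q := by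
    refine Prod.ext ?_ ?_ <;> funext i <;>
      simp only [Prod.fst_add, Prod.snd_add, Pi.add_apply, Pi.sub_apply, Pi.smul_apply,
        smul_eq_mul] <;> ring
  map_smul' c p := by
    refine Prod.ext ?_ ?_ <;> funext i <;>
      simp only [Prod.smul_fst, Prod.smul_snd, RingHom.id_apply, Pi.add_apply, Pi.sub_apply,
        Pi.smul_apply, smul_eq_mul] <;> ring

lemma phi_apply (u : F3 d) (x : F3 d) (a : ZMod d) :
    phi u (x, a) = (x + a • u, x - a • u) := rfl

lemma phi_inj (hd2 : (2 : ZMod d) ≠ 0) {u : F3 d} (hu : u ≠ 0) :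
    Function.Injective (phi (d := d) u) := by
  intro p q h
  have h1 : p.1 + p.2 • u = q.1 + q.2 • u := congrArg Prod.fst h
  have h2 : p.1 - p.2 • u = q.1 - q.2 • u := congrArg Prod.snd h
  have hsub : ((2 : ZMod d) * (p.2 - q.2)) • u = 0 := by
    funext i
    have e1 := congrFun h1 i
    have e2 := congrFun h2 i
    simp only [Pi.add_apply, Pi.sub_apply, Pi.smul_apply, smul_eq_mul] at e1 e2 ⊢
    simp only [Pi.zero_apply]
    linear_combination e1 - e2
  rcases smul_eq_zero.mp hsub with h0 | h0
  · have hp2 : p.2 = q.2 := by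
      have := (mul_eq_zero.mp h0).resolve_left hd2
      linear_combination this
    have hp1 : p.1 = q.1 := by
      funext i
      have e1 := congrFun h1 i
      simp only [Pi.add_apply, Pi.smul_apply, smul_eq_mul] at e1 ⊢
      linear_combination e1 - (u i) * hp2
    exact Prod.ext hp1 hp2
  · exact absurd h0 hu

def lfun (cvec : F3 d) (e : ZMod d) : (F3 d × ZMod d) →ₗ[ZMod d] ZMod d where
  toFun p := dot3 p.1 cvec + p.2 * e
  map_add' p q := by
    simp only [Prod.fst_add, Prod.snd_add, dot3_add_left]; ring
  map_smul' c p := by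
    simp only [Prod.smul_fst, Prod.smul_snd, dot3_smul_left, RingHom.id_apply, smul_eq_mul]; ring

lemma lfun_apply (cvec : F3 d) (e : ZMod d) (x : F3 d) (a : ZMod d) :
    lfun cvec e (x, a) = dot3 x cvec + a * e := rfl

lemma finrank_map_ker₂ (f : (F3 d × ZMod d) →ₗ[ZMod d] V6 d) (hf : Function.Injective f)
    (g : (F3 d × ZMod d) →ₗ[ZMod d] ZMod d × ZMod d) (w w' : F3 d × ZMod d)
    (hw : g w = (1, 0)) (hw' : g w' = (0, 1)) :
    Module.finrank (ZMod d) ↥((LinearMap.ker g).map f) = 2 := by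
  have hg : LinearMap.range g = ⊤ := by
    rw [eq_top_iff]
    rintro ⟨c₁, c₂⟩ -
    refine LinearMap.mem_range.mpr ⟨c₁ • w + c₂ • w', ?_⟩
    rw [map_add, map_smul, map_smul, hw, hw']
    refine Prod.ext ?_ ?_ <;> simp
  rw [← LinearEquiv.finrank_eq (Submodule.equivMapOfInjective f hf (LinearMap.ker g))]
  have h := LinearMap.finrank_range_add_finrank_ker g
  rw [hg, finrank_top] at h
  have h1 : Module.finrank (ZMod d) (F3 d × ZMod d) = 4 := by
    simp [Module.finrank_prod, Module.finrank_pi]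
  have h2 : Module.finrank (ZMod d) (ZMod d × ZMod d) = 2 := by
    simp [Module.finrank_prod]
  omega

lemma finrank_map_ker₁ (f : (F3 d × ZMod d) →ₗ[ZMod d] V6 d) (hf : Function.Injective f)
    (g : (F3 d × ZMod d) →ₗ[ZMod d] ZMod d) (w : F3 d × ZMod d) (hw : g w = 1) :
    Module.finrank (ZMod d) ↥((LinearMap.ker g).map f) = 3 := by
  have hg : LinearMap.range g = ⊤ := by
    rw [eq_top_iff]
    rintro c -
    refine LinearMap.mem_range.mpr ⟨c • w, ?_⟩
    rw [map_smul, hw, smul_eq_mul, mul_one]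
  rw [← LinearEquiv.finrank_eq (Submodule.equivMapOfInjective f hf (LinearMap.ker g))]
  have h := LinearMap.finrank_range_add_finrank_ker g
  rw [hg, finrank_top] at h
  have h1 : Module.finrank (ZMod d) (F3 d × ZMod d) = 4 := by
    simp [Module.finrank_prod, Module.finrank_pi]
  have h2 : Module.finrank (ZMod d) (ZMod d) = 1 := Module.finrank_self _
  omega

end WithPrime


section Main

variable [Fact (Nat.Prime d)]

lemma Tv_eq_map (u : F3 d) :
    Tv d u = (LinearMap.ker (lfun (d := d) u 0)).map (phi u) := by
  ext p
  simp only [Submodule.mem_map, LinearMap.mem_ker]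
  constructor
  · rintro ⟨x, a, hx, rfl⟩
    exact ⟨(x, a), by rw [lfun_apply, hx, mul_zero, add_zero], rfl⟩
  · rintro ⟨⟨x, a⟩, hk, rfl⟩
    rw [lfun_apply, mul_zero, add_zero] at hk
    exact ⟨x, a, hk, rfl⟩

lemma Tv_smul (hd2 : (2 : ZMod d) ≠ 0) {c : ZMod d} (hc : c ≠ 0) (u : F3 d) :
    Tv d (c • u) = Tv d u := by
  ext p
  rw [mem_Tv_iff hd2, mem_Tv_iff hd2]
  apply and_congr
  · rw [dot3_smul_right]
    constructor
    · intro h; exact (mul_eq_zero.mp h).resolve_left hc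
    · intro h; rw [h, mul_zero]
  · constructor
    · rintro ⟨a, h⟩
      exact ⟨a * c, by rw [h, smul_smul]⟩
    · rintro ⟨a, h⟩
      refine ⟨a * c⁻¹, ?_⟩
      rw [h, smul_smul, mul_assoc, inv_mul_cancel₀ hc, mul_one]

lemma span_eq_of_smul {u v : F3 d} {c : ZMod d} (hc : c ≠ 0) (hcv : c • u = v) :
    Submodule.span (ZMod d) {u} = Submodule.span (ZMod d) {v} := by
  apply le_antisymm <;> rw [Submodule.span_le, Set.singleton_subset_iff] <;>
    rw [SetLike.mem_coe, Submodule.mem_span_singleton]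
  · exact ⟨c⁻¹, by rw [← hcv, smul_smul, inv_mul_cancel₀ hc, one_smul]⟩
  · exact ⟨c, hcv⟩

lemma indep_zero {u v : F3 d} (hu : u ≠ 0) (hv : v ≠ 0)
    (hspan : Submodule.span (ZMod d) {u} ≠ Submodule.span (ZMod d) {v})
    {a b : ZMod d} (h : a • u = b • v) : a = 0 ∧ b = 0 := by
  by_cases ha : a = 0
  · subst ha
    rw [zero_smul] at h
    have hb := (smul_eq_zero.mp h.symm).resolve_right hv
    exact ⟨rfl, hb⟩
  · exfalso
    have hb : b ≠ 0 := by
      intro hb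
      subst hb
      rw [zero_smul] at h
      exact ha ((smul_eq_zero.mp h).resolve_right hu)
    apply hspan
    apply le_antisymm <;> rw [Submodule.span_le, Set.singleton_subset_iff] <;>
      rw [SetLike.mem_coe, Submodule.mem_span_singleton]
    · exact ⟨a⁻¹ * b, by rw [mul_smul, ← h, smul_smul, inv_mul_cancel₀ ha, one_smul]⟩
    · exact ⟨b⁻¹ * a, by rw [mul_smul, h, smul_smul, inv_mul_cancel₀ hb, one_smul]⟩

lemma D_ne {u v : F3 d} (hu : u ≠ 0) (hv : v ≠ 0)
    (hu1 : u 0 + u 1 + u 2 = 0) (hv1 : v 0 + v 1 + v 2 = 0)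
    (hspan : Submodule.span (ZMod d) {u} ≠ Submodule.span (ZMod d) {v}) :
    u 0 * v 1 - u 1 * v 0 ≠ 0 := by
  intro hD
  have hu01 : u 0 ≠ 0 ∨ u 1 ≠ 0 := by
    by_contra h
    push_neg at h
    apply hu
    have h2 : u 2 = 0 := by linear_combination hu1 - h.1 - h.2
    funext i; fin_cases i <;> simpa [h.1, h.2]
  have hcv : ∃ c : ZMod d, c • u = v := by
    rcases hu01 with h | h
    · refine ⟨v 0 * (u 0)⁻¹, ?_⟩
      refine eq3 ?_ ?_ ?_ <;> simp only [Pi.smul_apply, smul_eq_mul]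
      · field_simp
      · field_simp
        linear_combination -hD
      · field_simp
        linear_combination v 0 * hu1 - u 0 * hv1 + hD
    · refine ⟨v 1 * (u 1)⁻¹, ?_⟩
      refine eq3 ?_ ?_ ?_ <;> simp only [Pi.smul_apply, smul_eq_mul]
      · field_simp
        linear_combination hD
      · field_simp
      · field_simp
        linear_combination v 1 * hu1 - u 1 * hv1 - hD
  obtain ⟨c, hc⟩ := hcv
  have hc0 : c ≠ 0 := by
    intro h
    subst h
    rw [zero_smul] at hc
    exact hv hc.symm
  exact hspan (span_eq_of_smul hc0 hc)

lemma perp_one {u v x : F3 d} (hu1 : u 0 + u 1 + u 2 = 0) (hv1 : v 0 + v 1 + v 2 = 0)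
    (hD : u 0 * v 1 - u 1 * v 0 ≠ 0) (hxu : dot3 x u = 0) (hxv : dot3 x v = 0) :
    x = (x 2) • one3 d := by
  rw [dot3_expand] at hxu hxv
  have h1 : (x 0 - x 2) * u 0 + (x 1 - x 2) * u 1 = 0 := by
    linear_combination hxu - x 2 * hu1
  have h2 : (x 0 - x 2) * v 0 + (x 1 - x 2) * v 1 = 0 := by
    linear_combination hxv - x 2 * hv1
  have e0 : (x 0 - x 2) * (u 0 * v 1 - u 1 * v 0) = 0 := by
    linear_combination v 1 * h1 - u 1 * h2
  have e1 : (x 1 - x 2) * (u 0 * v 1 - u 1 * v 0) = 0 := by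
    linear_combination -(v 0) * h1 + u 0 * h2
  have hx0 : x 0 = x 2 := by
    have := (mul_eq_zero.mp e0).resolve_right hD
    linear_combination this
  have hx1 : x 1 = x 2 := by
    have := (mul_eq_zero.mp e1).resolve_right hD
    linear_combination this
  refine eq3 ?_ ?_ ?_ <;> simp only [Pi.smul_apply, smul_eq_mul, one3, mul_one]
  · exact hx0
  · exact hx1

lemma keyequiv (hd2 : (2 : ZMod d) ≠ 0) {u v : F3 d} (hv : v ≠ 0)
    (hu1 : u 0 + u 1 + u 2 = 0) (hv1 : v 0 + v 1 + v 2 = 0)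
    (x : F3 d) (a : ZMod d) :
    ((x + a • u, x - a • u) : V6 d) ∈ tauT d (Tv d v) ↔
      (v 2 * (2 * x 2 - x 0 - x 1) + a * ((u 1 - u 0) * (v 0 - v 1)) = 0 ∧
       a * (u 2 * (v 0 - v 1)) - (x 1 - x 0) * v 2 = 0) := by
  rw [mem_tauT, mem_Tv_iff hd2]
  have hM : dot3 (swap3 ((x + a • u, x - a • u) : V6 d).1 + ((x + a • u, x - a • u) : V6 d).2) v
      = v 2 * (2 * x 2 - x 0 - x 1) + a * ((u 1 - u 0) * (v 0 - v 1)) := by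
    simp only [swap3, dot3_expand, Matrix.cons_val_zero, Matrix.cons_val_one, Matrix.head_cons,
      Matrix.cons_val_two, Matrix.tail_cons, Pi.add_apply, Pi.sub_apply, Pi.smul_apply,
      smul_eq_mul]
    linear_combination (x 0 + x 1) * hv1
  rw [hM]
  apply and_congr Iff.rfl
  constructor
  · rintro ⟨c, hc⟩
    have e0 : x 1 - x 0 - a * u 2 = c * v 0 := by
      have h := congrFun hc 0
      simp only [swap3, Matrix.cons_val_zero, Pi.add_apply, Pi.sub_apply, Pi.smul_apply,
        smul_eq_mul] at h
      linear_combination h - a * hu1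
    have e1 : x 0 - x 1 - a * u 2 = c * v 1 := by
      have h := congrFun hc 1
      simp only [swap3, Matrix.cons_val_one, Matrix.cons_val_zero, Matrix.head_cons, Pi.add_apply, Pi.sub_apply,
        Pi.smul_apply, smul_eq_mul] at h
      linear_combination h - a * hu1
    have e2 : (2 : ZMod d) * (a * u 2) = c * v 2 := by
      have h := congrFun hc 2
      simp only [swap3, Matrix.cons_val_two, Matrix.tail_cons, Matrix.head_cons, Pi.add_apply,
        Pi.sub_apply, Pi.smul_apply, smul_eq_mul] at h
      linear_combination h
    have hcL : c * (a * (u 2 * (v 0 - v 1)) - (x 1 - x 0) * v 2) = 0 := by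
      linear_combination -(a * u 2) * e0 + (a * u 2) * e1 + (x 1 - x 0) * e2
    rcases mul_eq_zero.mp hcL with hc0 | hL0
    · rw [hc0, zero_mul] at e0 e1
      have h2z : (2 : ZMod d) * (a * u 2) = 0 := by linear_combination -e0 - e1
      have hau : a * u 2 = 0 := (mul_eq_zero.mp h2z).resolve_left hd2
      have hx10 : x 1 - x 0 = 0 := by linear_combination e0 + hau
      linear_combination (v 0 - v 1) * hau - v 2 * hx10
    · exact hL0
  · intro hL0
    have hsum : (swap3 (x + a • u) - (x - a • u)) 0 + (swap3 (x + a • u) - (x - a • u)) 1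
        + (swap3 (x + a • u) - (x - a • u)) 2 = 0 := by
      simp only [swap3, Matrix.cons_val_zero, Matrix.cons_val_one, Matrix.head_cons,
        Matrix.cons_val_two, Matrix.tail_cons, Pi.add_apply, Pi.sub_apply, Pi.smul_apply,
        smul_eq_mul]
      linear_combination (2 * a) * hu1
    have hcross : (swap3 (x + a • u) - (x - a • u)) 0 * v 1
        - (swap3 (x + a • u) - (x - a • u)) 1 * v 0 = 0 := by
      simp only [swap3, Matrix.cons_val_zero, Matrix.cons_val_one, Matrix.head_cons,
        Pi.add_apply, Pi.sub_apply, Pi.smul_apply, smul_eq_mul]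
      linear_combination hL0 + (x 1 - x 0) * hv1 + a * (v 1 - v 0) * hu1
    exact cross_span hv hv1 _ hsum hcross


lemma lprod_apply (c1 : F3 d) (e1 : ZMod d) (c2 : F3 d) (e2 : ZMod d) (x : F3 d) (a : ZMod d) :
    ((lfun c1 e1).prod (lfun c2 e2)) (x, a) = (dot3 x c1 + a * e1, dot3 x c2 + a * e2) := rfl

end Main


end StmtAux

open StmtAux

theorem stmt10 (d : ℕ) (hd : d.Prime) (hodd : Odd d)
    (u v : F3 d) (hu : u ≠ 0) (hv : v ≠ 0)
    (hu1 : dot3 u (one3 d) = 0) (hv1 : dot3 v (one3 d) = 0) :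
    (((one3 d, one3 d) : V6 d) ∈ Tv d u ⊓ Tv d v ∧
      ((one3 d, one3 d) : V6 d) ∈ tauT d (Tv d u) ⊓ tauT d (Tv d v) ∧
      ((one3 d, one3 d) : V6 d) ∈ Tv d u ⊓ tauT d (Tv d v)) ∧
    (Submodule.span (ZMod d) {u} = Submodule.span (ZMod d) {v} →
      Module.finrank (ZMod d) ↥(Tv d u ⊓ Tv d v) = 3 ∧
      Module.finrank (ZMod d) ↥(tauT d (Tv d u) ⊓ tauT d (Tv d v)) = 3) ∧
    (Submodule.span (ZMod d) {u} ≠ Submodule.span (ZMod d) {v} →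
      Module.finrank (ZMod d) ↥(Tv d u ⊓ Tv d v) = 1 ∧
      Module.finrank (ZMod d) ↥(tauT d (Tv d u) ⊓ tauT d (Tv d v)) = 1) ∧
    Module.finrank (ZMod d) ↥(Tv d u ⊓ tauT d (Tv d v)) = 2 := by
  haveI : Fact d.Prime := ⟨hd⟩
  have hd2 : (2 : ZMod d) ≠ 0 := by
    intro h
    have h2 : ((2 : ℕ) : ZMod d) = 0 := by exact_mod_cast h
    have hdvd := (ZMod.natCast_eq_zero_iff 2 d).mp h2
    have hd2' := (Nat.prime_dvd_prime_iff_eq hd Nat.prime_two).mp hdvd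
    rw [hd2'] at hodd
    simp [Nat.odd_iff] at hodd
  have hu1' : u 0 + u 1 + u 2 = 0 := by
    rw [dot3_expand] at hu1; simpa [one3] using hu1
  have hv1' : v 0 + v 1 + v 2 = 0 := by
    rw [dot3_expand] at hv1; simpa [one3] using hv1
  -- memberships
  have memTv : ∀ w : F3 d, w 0 + w 1 + w 2 = 0 →
      ((one3 d, one3 d) : V6 d) ∈ Tv d w := by
    intro w hw
    refine mem_Tv_def.mpr ⟨one3 d, 0, ?_, ?_⟩
    · rw [dot3_expand]; simp only [one3]; linear_combination hw
    · simp
  have memTau : ∀ w : F3 d, w 0 + w 1 + w 2 = 0 →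
      ((one3 d, one3 d) : V6 d) ∈ tauT d (Tv d w) := by
    intro w hw
    rw [mem_tauT]
    have hs : swap3 (one3 d) = one3 d := by
      funext i; fin_cases i <;> simp [swap3, one3]
    simpa [hs] using memTv w hw
  have hone : ((one3 d, one3 d) : V6 d) ≠ 0 := by
    intro h
    have h0 := congrFun (congrArg Prod.fst h) 0
    simp [one3] at h0
  -- finrank of a single Tv
  have hTv3 : ∀ w : F3 d, w ≠ 0 → Module.finrank (ZMod d) ↥(Tv d w) = 3 := by
    intro w hw
    obtain ⟨x, hx⟩ : ∃ x : F3 d, dot3 x w = 1 := by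
      have hcomp : w 0 ≠ 0 ∨ w 1 ≠ 0 ∨ w 2 ≠ 0 := by
        by_contra h; push_neg at h
        exact hw (by funext i; fin_cases i <;> simp [h.1, h.2.1, h.2.2])
      rcases hcomp with h | h | h
      · exact ⟨![(w 0)⁻¹, 0, 0], by rw [dot3_expand]; simp [inv_mul_cancel₀ h]⟩
      · exact ⟨![0, (w 1)⁻¹, 0], by rw [dot3_expand]; simp [inv_mul_cancel₀ h]⟩
      · exact ⟨![0, 0, (w 2)⁻¹], by rw [dot3_expand]; simp [inv_mul_cancel₀ h]⟩
    rw [Tv_eq_map w]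
    exact finrank_map_ker₁ _ (phi_inj hd2 hw) _ (x, 0)
      (by rw [lfun_apply, hx, mul_zero, add_zero])
  refine ⟨⟨Submodule.mem_inf.mpr ⟨memTv u hu1', memTv v hv1'⟩,
      Submodule.mem_inf.mpr ⟨memTau u hu1', memTau v hv1'⟩,
      Submodule.mem_inf.mpr ⟨memTv u hu1', memTau v hv1'⟩⟩, ?_, ?_, ?_⟩
  · -- collinear case
    intro hspan
    obtain ⟨c, hc⟩ : ∃ c : ZMod d, c • u = v :=
      Submodule.mem_span_singleton.mp
        (by rw [hspan]; exact Submodule.mem_span_singleton_self v)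
    have hc0 : c ≠ 0 := fun h => hv (by rw [← hc, h, zero_smul])
    have hTvv : Tv d v = Tv d u := by rw [← hc]; exact Tv_smul hd2 hc0 u
    constructor
    · rw [hTvv, inf_idem]; exact hTv3 u hu
    · rw [hTvv, inf_idem, finrank_tauT]; exact hTv3 u hu
  · -- independent case
    intro hspan
    have hD := D_ne hu hv hu1' hv1' hspan
    have hinf : Tv d u ⊓ Tv d v
        = Submodule.span (ZMod d) {((one3 d, one3 d) : V6 d)} := by
      apply le_antisymm
      · rintro p hp
        obtain ⟨hpu, hpv⟩ := Submodule.mem_inf.mp hp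
        rw [mem_Tv_iff hd2] at hpu hpv
        obtain ⟨hdu, a, ha⟩ := hpu
        obtain ⟨hdv, b, hb⟩ := hpv
        have hab : a • u = b • v := by rw [← ha, ← hb]
        obtain ⟨ha0, -⟩ := indep_zero hu hv hspan hab
        rw [ha0, zero_smul] at ha
        have hpp : p.1 = p.2 := sub_eq_zero.mp ha
        rw [← hpp] at hdu hdv
        rw [dot3_add_left] at hdu hdv
        have hxu : dot3 p.1 u = 0 := by
          have h2 : (2 : ZMod d) * dot3 p.1 u = 0 := by linear_combination hdu
          exact (mul_eq_zero.mp h2).resolve_left hd2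
        have hxv : dot3 p.1 v = 0 := by
          have h2 : (2 : ZMod d) * dot3 p.1 v = 0 := by linear_combination hdv
          exact (mul_eq_zero.mp h2).resolve_left hd2
        have hx := perp_one hu1' hv1' hD hxu hxv
        rw [Submodule.mem_span_singleton]
        refine ⟨p.1 2, ?_⟩
        have hsm : (p.1 2) • ((one3 d, one3 d) : V6 d)
            = ((p.1 2) • one3 d, (p.1 2) • one3 d) := rfl
        rw [hsm, ← hx, Prod.ext_iff]
        exact ⟨rfl, hpp⟩
      · rw [Submodule.span_le, Set.singleton_subset_iff]
        exact Submodule.mem_inf.mpr ⟨memTv u hu1', memTv v hv1'⟩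
    constructor
    · rw [hinf]; exact finrank_span_singleton hone
    · rw [tauT_inf, finrank_tauT, hinf]; exact finrank_span_singleton hone
  · -- mixed case : finrank = 2
    have hvne : ¬(v 2 = 0 ∧ v 0 - v 1 = 0) := by
      rintro ⟨h2, h01⟩
      apply hv
      have h0 : v 0 = 0 := by
        have hz : (2 : ZMod d) * v 0 = 0 := by linear_combination hv1' - h2 + h01
        exact (mul_eq_zero.mp hz).resolve_left hd2
      have h1 : v 1 = 0 := by linear_combination h0 - h01
      funext i; fin_cases i <;> simpa [h0, h1, h2]
    by_cases hu2 : u 2 = 0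
    · -- case u 2 = 0, use the M functional
      have hu0 : u 0 ≠ 0 := by
        intro h0; apply hu
        have h1 : u 1 = 0 := by linear_combination hu1' - h0 - hu2
        funext i; fin_cases i <;> simpa [h0, h1, hu2]
      have hMdot : ∀ x : F3 d, dot3 x (![-(v 2), -(v 2), 2 * v 2] : F3 d)
          = v 2 * (2 * x 2 - x 0 - x 1) := by
        intro x; rw [dot3_expand]; simp; ring
      have hinf : Tv d u ⊓ tauT d (Tv d v)
          = (LinearMap.ker ((lfun u 0).prod
              (lfun (![-(v 2), -(v 2), 2 * v 2] : F3 d) ((u 1 - u 0) * (v 0 - v 1))))).map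
              (phi u) := by
        ext p
        simp only [Submodule.mem_map, LinearMap.mem_ker, Submodule.mem_inf]
        constructor
        · rintro ⟨hp1, hp2⟩
          obtain ⟨x, a, hx, rfl⟩ := mem_Tv_def.mp hp1
          obtain ⟨hM, hL⟩ := (keyequiv hd2 hv hu1' hv1' x a).mp hp2
          refine ⟨(x, a), ?_, rfl⟩
          rw [lprod_apply, Prod.mk_eq_zero]
          constructor
          · rw [hx, mul_zero, add_zero]
          · rw [hMdot x]; linear_combination hM
        · rintro ⟨⟨x, a⟩, hk, rfl⟩
          rw [lprod_apply, Prod.mk_eq_zero] at hk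
          obtain ⟨hx, hM⟩ := hk
          rw [mul_zero, add_zero] at hx
          rw [hMdot x] at hM
          refine ⟨mem_Tv_def.mpr ⟨x, a, hx, rfl⟩, ?_⟩
          apply (keyequiv hd2 hv hu1' hv1' x a).mpr
          refine ⟨by linear_combination hM, ?_⟩
          have h10 : u 0 * (x 0 - x 1) = 0 := by
            rw [dot3_expand] at hx
            linear_combination hx - x 1 * hu1' + (x 1 - x 2) * hu2
          have hx01 : x 0 = x 1 := by
            have := (mul_eq_zero.mp h10).resolve_left hu0
            linear_combination this
          linear_combination a * (v 0 - v 1) * hu2 + v 2 * hx01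
      rw [hinf]
      have hW1 : ((lfun u 0).prod
          (lfun (![-(v 2), -(v 2), 2 * v 2] : F3 d) ((u 1 - u 0) * (v 0 - v 1))))
          ((![(u 0)⁻¹, 0, 2⁻¹ * (u 0)⁻¹] : F3 d), (0 : ZMod d)) = (1, 0) := by
        rw [lprod_apply, hMdot]
        rw [dot3_expand]
        simp only [Matrix.cons_val_zero, Matrix.cons_val_one, Matrix.head_cons,
          Matrix.cons_val_two, Matrix.tail_cons, Prod.mk.injEq]
        constructor
        · rw [hu2]; field_simp; ring
        · field_simp; ring
      have hW2 : ∃ w' : F3 d × ZMod d, ((lfun u 0).prod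
          (lfun (![-(v 2), -(v 2), 2 * v 2] : F3 d) ((u 1 - u 0) * (v 0 - v 1)))) w'
          = (0, 1) := by
        by_cases hv2 : v 2 = 0
        · have h01 : v 0 - v 1 ≠ 0 := fun h => hvne ⟨hv2, h⟩
          have h10u : u 1 - u 0 ≠ 0 := by
            intro h
            apply hu0
            have hz : (2 : ZMod d) * u 0 = 0 := by linear_combination hu1' - hu2 - h
            exact (mul_eq_zero.mp hz).resolve_left hd2
          have heM : (u 1 - u 0) * (v 0 - v 1) ≠ 0 := mul_ne_zero h10u h01
          refine ⟨((0 : F3 d), ((u 1 - u 0) * (v 0 - v 1))⁻¹), ?_⟩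
          rw [lprod_apply, hMdot]
          simp only [Pi.zero_apply, Prod.mk.injEq]
          constructor
          · rw [dot3_expand]; simp
          · field_simp; ring
        · refine ⟨((![0, 0, 2⁻¹ * (v 2)⁻¹] : F3 d), 0), ?_⟩
          rw [lprod_apply, hMdot]
          rw [dot3_expand]
          simp only [Matrix.cons_val_zero, Matrix.cons_val_one, Matrix.head_cons,
            Matrix.cons_val_two, Matrix.tail_cons, Prod.mk.injEq]
          constructor
          · rw [hu2]; ring
          · field_simp
            ring
      obtain ⟨w', hw'⟩ := hW2
      exact finrank_map_ker₂ _ (phi_inj hd2 hu) _ _ w' hW1 hw'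
    · -- case u 2 ≠ 0, use the L functional
      have hLdot : ∀ x : F3 d, dot3 x (![v 2, -(v 2), 0] : F3 d)
          = x 0 * v 2 - x 1 * v 2 := by
        intro x; rw [dot3_expand]; simp; ring
      have hinf : Tv d u ⊓ tauT d (Tv d v)
          = (LinearMap.ker ((lfun u 0).prod
              (lfun (![v 2, -(v 2), 0] : F3 d) (u 2 * (v 0 - v 1))))).map (phi u) := by
        ext p
        simp only [Submodule.mem_map, LinearMap.mem_ker, Submodule.mem_inf]
        constructor
        · rintro ⟨hp1, hp2⟩
          obtain ⟨x, a, hx, rfl⟩ := mem_Tv_def.mp hp1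
          obtain ⟨hM, hL⟩ := (keyequiv hd2 hv hu1' hv1' x a).mp hp2
          refine ⟨(x, a), ?_, rfl⟩
          rw [lprod_apply, Prod.mk_eq_zero]
          constructor
          · rw [hx, mul_zero, add_zero]
          · rw [hLdot x]; linear_combination hL
        · rintro ⟨⟨x, a⟩, hk, rfl⟩
          rw [lprod_apply, Prod.mk_eq_zero] at hk
          obtain ⟨hx, hL⟩ := hk
          rw [mul_zero, add_zero] at hx
          rw [hLdot x] at hL
          refine ⟨mem_Tv_def.mpr ⟨x, a, hx, rfl⟩, ?_⟩
          apply (keyequiv hd2 hv hu1' hv1' x a).mpr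
          have hxex : x 0 * u 0 + x 1 * u 1 + x 2 * u 2 = 0 := by
            rw [dot3_expand] at hx; linear_combination hx
          refine ⟨?_, by linear_combination hL⟩
          have hMz : u 2 * (v 2 * (2 * x 2 - x 0 - x 1)
              + a * ((u 1 - u 0) * (v 0 - v 1))) = 0 := by
            linear_combination (u 1 - u 0) * hL + 2 * v 2 * hxex
              - v 2 * (x 0 + x 1) * hu1'
          exact (mul_eq_zero.mp hMz).resolve_left hu2
      rw [hinf]
      have hW1 : ((lfun u 0).prod
          (lfun (![v 2, -(v 2), 0] : F3 d) (u 2 * (v 0 - v 1))))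
          ((![0, 0, (u 2)⁻¹] : F3 d), (0 : ZMod d)) = (1, 0) := by
        rw [lprod_apply, hLdot]
        rw [dot3_expand]
        simp only [Matrix.cons_val_zero, Matrix.cons_val_one, Matrix.head_cons,
          Matrix.cons_val_two, Matrix.tail_cons, Prod.mk.injEq]
        constructor
        · field_simp; ring
        · ring
      have hW2 : ∃ w' : F3 d × ZMod d, ((lfun u 0).prod
          (lfun (![v 2, -(v 2), 0] : F3 d) (u 2 * (v 0 - v 1)))) w' = (0, 1) := by
        by_cases hv2 : v 2 = 0
        · have h01 : v 0 - v 1 ≠ 0 := fun h => hvne ⟨hv2, h⟩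
          have heL : u 2 * (v 0 - v 1) ≠ 0 := mul_ne_zero hu2 h01
          refine ⟨((0 : F3 d), (u 2 * (v 0 - v 1))⁻¹), ?_⟩
          rw [lprod_apply, hLdot]
          simp only [Pi.zero_apply, Prod.mk.injEq]
          constructor
          · rw [dot3_expand]; simp
          · field_simp; ring
        · refine ⟨((![(v 2)⁻¹, 0, -(u 0) * (u 2)⁻¹ * (v 2)⁻¹] : F3 d), 0), ?_⟩
          rw [lprod_apply, hLdot]
          rw [dot3_expand]
          simp only [Matrix.cons_val_zero, Matrix.cons_val_one, Matrix.head_cons,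
            Matrix.cons_val_two, Matrix.tail_cons, Prod.mk.injEq]
          constructor
          · field_simp
            ring
          · field_simp; ring
      obtain ⟨w', hw'⟩ := hW2
      exact finrank_map_ker₂ _ (phi_inj hd2 hu) _ _ w' hW1 hw'
end
end

section
/- Let d be an odd prime, n ≥ 1, and D := dⁿ. If d = 3, let T̃₀ := span{((1,2,0);(1,2,0)), ((0,0,0);(1,1,1)), ((1,1,1);(0,0,0))} and T̃₁ := span{((1,2,0);(2,1,0)), ((0,0,0);(1,1,1)), ((1,1,1);(0,0,0))} in 𝔽₃⁶; then R_n(T̃_i)† = R_n(T̃_i) and R_n(T̃_i)·R_n(T̃_j) = 3ⁿ·R_n(T̃_{i+j mod 2}) for all i, j ∈ {0,1}. If d ≡ 1 (mod 3), let ξ ∈ 𝔽_d have multiplicative order 3, g₀ := (1,ξ,ξ²), g₁ := (1,ξ²,ξ), and T̃_{ij} := span{(g_i;0), (0;g_j), (1₃;1₃)}; then R_n(T̃_{ij})† = R_n(T̃_{ji}) and R_n(T̃_{ij})·R_n(T̃_{kl}) = D^{1−|j−k|}·R_n(T̃_{il}) for all i, j, k, l ∈ {0,1}. -/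
open scoped Classical

noncomputable section

/-- `R_n(T)`: the complex matrix indexed by `(𝔽_d³)ⁿ` with `((X₁,…,Xₙ),(Y₁,…,Yₙ))`
entry `1` if `(Xᵢ; Yᵢ) ∈ T` for all `i`, and `0` otherwise. -/
def Rn (d n : ℕ) (T : Submodule (ZMod d) (V6 d)) :
    Matrix (Fin n → F3 d) (Fin n → F3 d) ℂ :=
  Matrix.of fun X Y => if ∀ i, (X i, Y i) ∈ T then 1 else 0

/-!
Membership in `R_n(T)` factorises over the `n` tensor factors, so
`R_n(T) R_n(T') = cⁿ R_n(T'')` as soon as, for all `x, z ∈ 𝔽_d³`, the number of `y` with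
`(x; y) ∈ T` and `(y; z) ∈ T'` is `c` or `0` according as `(x; z) ∈ T''` or not; the adjoint
identities hold because the subspaces are exchanged by swapping the two halves.
For `d = 3` these single-site counts are checked exhaustively.
For `d ≡ 1 (mod 3)` let `g = (1, ω, ω²)` and `ḡ = (1, ω², ω)` for a primitive cube root `ω`.
Then `g·g = g·1₃ = 0` and `g·ḡ = 1₃·1₃ = 3`, so `x = (x·ḡ g + x·g ḡ + x·1₃ 1₃) / 3` and
`T̃_{ij} = {(x; y) | x·g_i = 0, y·g_j = 0, x·1₃ = y·1₃}`. For `(x; z) ∈ T̃_{il}` the admissible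
`y` are those with `y·g_j = y·g_k = 0` and `y·1₃ = x·1₃`: a line of `d` points if `j = k`, and
the single point `(x·1₃ / 3) 1₃` if `j ≠ k`.
-/

open Finset
open scoped Matrix

lemma Rn_apply {d : ℕ} (n : ℕ) (T : Submodule (ZMod d) (V6 d)) (X Y : Fin n → F3 d) :
    Rn d n T X Y = ∏ i, if (X i, Y i) ∈ T then (1 : ℂ) else 0 := by
  simp [Rn, prod_boole]

lemma conjTranspose_Rn {d n : ℕ} {T T' : Submodule (ZMod d) (V6 d)}
    (h : ∀ x y : F3 d, (x, y) ∈ T ↔ (y, x) ∈ T') :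
    (Rn d n T)ᴴ = Rn d n T' := by
  ext X Y
  simp [Rn, h]

lemma Rn_mul_Rn {d n : ℕ} [NeZero d] {T T' T'' : Submodule (ZMod d) (V6 d)} (c : ℕ)
    (h : ∀ x z : F3 d, #{y | (x, y) ∈ T ∧ (y, z) ∈ T'} = if (x, z) ∈ T'' then c else 0) :
    Rn d n T * Rn d n T' = ((c : ℂ) ^ n) • Rn d n T'' := by
  have hsite : ∀ x z : F3 d, ∑ y, (if (x, y) ∈ T then (1 : ℂ) else 0) *
      (if (y, z) ∈ T' then 1 else 0) = c * if (x, z) ∈ T'' then 1 else 0 := by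
    intro x z
    simp_rw [ite_zero_mul_ite_zero, mul_one, sum_boole, h]
    split_ifs <;> simp
  ext X Z
  calc (Rn d n T * Rn d n T') X Z
      = ∑ Y : Fin n → F3 d, ∏ i, (if (X i, Y i) ∈ T then (1 : ℂ) else 0) *
          (if (Y i, Z i) ∈ T' then 1 else 0) := by
        simp only [Matrix.mul_apply, Rn_apply, prod_mul_distrib]
    _ = ∏ i, ∑ y, (if (X i, y) ∈ T then (1 : ℂ) else 0) * (if (y, Z i) ∈ T' then 1 else 0) := by
        rw [Fintype.prod_sum]
    _ = _ := by
        simp only [hsite, prod_mul_distrib, prod_const, card_univ, Fintype.card_fin,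
          Matrix.smul_apply, Rn_apply, smul_eq_mul]

abbrev Td3Rel (i : Fin 2) (x y : F3 3) : Prop :=
  x ⬝ᵥ one3 3 = 0 ∧ y ⬝ᵥ one3 3 = 0 ∧
    x ⬝ᵥ ![1, 2, 0] = (if i = 0 then 1 else 2) * y ⬝ᵥ ![1, 2, 0]

set_option maxHeartbeats 1000000 in
lemma mem_Td3_iff (i : Fin 2) (x y : F3 3) : (x, y) ∈ Td3 3 i ↔ Td3Rel i x y := by
  fin_cases i <;>
  · show (x, y) ∈ Submodule.span (ZMod 3) _ ↔ _
    rw [Submodule.mem_span_triple]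
    revert x y
    decide

lemma Td3Rel_comm (i : Fin 2) (x y : F3 3) : Td3Rel i x y ↔ Td3Rel i y x := by
  revert x y; fin_cases i <;> decide

lemma card_Td3Rel_comp (i j : Fin 2) (x z : F3 3) :
    #{y | Td3Rel i x y ∧ Td3Rel j y z} = if Td3Rel (i + j) x z then 3 else 0 := by
  revert x z; fin_cases i <;> fin_cases j <;> decide

section CubeRoot

variable {d : ℕ}

@[simp] lemma one3_apply (i : Fin 3) : one3 d i = 1 := rfl

def rootVec (ω : ZMod d) : F3 d := ![1, ω, ω ^ 2]

def rootLagrangian (ω θ : ZMod d) : Submodule (ZMod d) (V6 d) :=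
  Submodule.span (ZMod d) {(rootVec ω, 0), (0, rootVec θ), (one3 d, one3 d)}

variable {ω θ κ μ : ZMod d}

@[simp] lemma rootVec_zero : rootVec ω 0 = 1 := rfl

@[simp] lemma rootVec_one : rootVec ω 1 = ω := rfl

@[simp] lemma rootVec_two : rootVec ω 2 = ω ^ 2 := rfl

lemma dotProduct_rootVec (x : F3 d) : x ⬝ᵥ rootVec ω = x 0 + x 1 * ω + x 2 * ω ^ 2 := by
  simp [dotProduct, Fin.sum_univ_three]

lemma dotProduct_one3 (x : F3 d) : x ⬝ᵥ one3 d = x 0 + x 1 + x 2 := by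
  simp [dotProduct, Fin.sum_univ_three]

lemma mem_rootLagrangian_swap {x y : F3 d} :
    (x, y) ∈ rootLagrangian ω θ ↔ (y, x) ∈ rootLagrangian θ ω := by
  simp only [rootLagrangian, Submodule.mem_span_triple, Prod.ext_iff, Prod.fst_add,
    Prod.snd_add, Prod.smul_fst, Prod.smul_snd, smul_zero, add_zero, zero_add]
  exact ⟨fun ⟨a, b, c, h⟩ => ⟨b, a, c, h.symm⟩, fun ⟨a, b, c, h⟩ => ⟨b, a, c, h.symm⟩⟩

lemma pow_three_eq_one_of_cyclotomic (hω : 1 + ω + ω ^ 2 = 0) : ω ^ 3 = 1 := by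
  linear_combination (ω - 1) * hω

lemma cyclotomic_sq_of_cyclotomic (hω : 1 + ω + ω ^ 2 = 0) : 1 + ω ^ 2 + (ω ^ 2) ^ 2 = 0 := by
  linear_combination ω * pow_three_eq_one_of_cyclotomic hω + hω

lemma smul_rootVec_add_smul_one_dotProduct_one (hω : 1 + ω + ω ^ 2 = 0) (a c : ZMod d) :
    (a • rootVec ω + c • one3 d) ⬝ᵥ one3 d = 3 * c := by
  simp only [dotProduct_one3, Pi.add_apply, Pi.smul_apply, smul_eq_mul, rootVec_zero,
    rootVec_one, rootVec_two, one3_apply]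
  linear_combination a * hω

lemma smul_rootVec_add_smul_one_dotProduct_rootVec (hω : 1 + ω + ω ^ 2 = 0) (a c : ZMod d) :
    (a • rootVec ω + c • one3 d) ⬝ᵥ rootVec ω = 0 := by
  simp only [dotProduct_rootVec, Pi.add_apply, Pi.smul_apply, smul_eq_mul, rootVec_zero,
    rootVec_one, rootVec_two, one3_apply]
  linear_combination (a * (ω - ω ^ 2 + 1) + c) * hω + 2 * a * ω * pow_three_eq_one_of_cyclotomic hω

variable [Invertible (3 : ZMod d)]

lemma eq_rootVec_inversion (hω : 1 + ω + ω ^ 2 = 0) (x : F3 d) :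
    x = ⅟(3 : ZMod d) • ((x ⬝ᵥ rootVec (ω ^ 2)) • rootVec ω +
      (x ⬝ᵥ rootVec ω) • rootVec (ω ^ 2) + (x ⬝ᵥ one3 d) • one3 d) := by
  have h3 : (3 : ZMod d) * ⅟3 = 1 := mul_invOf_self _
  have hω3 := pow_three_eq_one_of_cyclotomic hω
  set s : ZMod d := ⅟3
  ext k
  simp only [Pi.smul_apply, Pi.add_apply, smul_eq_mul, one3_apply, dotProduct_rootVec,
    dotProduct_one3]
  fin_cases k <;> simp only [Fin.zero_eta, Fin.mk_one, Fin.reduceFinMk, rootVec_zero,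
    rootVec_one, rootVec_two]
  · linear_combination (-x 0) * h3 - s * x 1 * hω - s * x 2 * (1 - ω + ω ^ 2) * hω
  · linear_combination (-x 1) * h3 - 2 * s * x 1 * hω3 - s * x 0 * hω
      - s * x 2 * (ω ^ 2 + ω) * hω3 - s * x 2 * hω
  · linear_combination (-x 2) * h3 - 2 * s * x 2 * (ω ^ 3 + 1) * hω3
      - s * x 0 * (1 - ω + ω ^ 2) * hω - s * x 1 * (ω ^ 2 + ω) * hω3 - s * x 1 * hω

lemma eq_smul_rootVec_add_smul_one (hω : 1 + ω + ω ^ 2 = 0) {x : F3 d}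
    (hx : x ⬝ᵥ rootVec ω = 0) :
    x = (⅟3 * x ⬝ᵥ rootVec (ω ^ 2)) • rootVec ω + (⅟3 * x ⬝ᵥ one3 d) • one3 d := by
  conv_lhs => rw [eq_rootVec_inversion hω x]
  rw [hx, zero_smul, add_zero, smul_add, smul_smul, smul_smul]

lemma mem_rootLagrangian_iff (hω : 1 + ω + ω ^ 2 = 0) (hθ : 1 + θ + θ ^ 2 = 0) {x y : F3 d} :
    (x, y) ∈ rootLagrangian ω θ ↔
      x ⬝ᵥ rootVec ω = 0 ∧ y ⬝ᵥ rootVec θ = 0 ∧ x ⬝ᵥ one3 d = y ⬝ᵥ one3 d := by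
  simp only [rootLagrangian, Submodule.mem_span_triple, Prod.ext_iff, Prod.fst_add,
    Prod.snd_add, Prod.smul_fst, Prod.smul_snd, smul_zero, add_zero, zero_add]
  constructor
  · rintro ⟨a, b, c, rfl, rfl⟩
    rw [smul_rootVec_add_smul_one_dotProduct_one hω, smul_rootVec_add_smul_one_dotProduct_one hθ]
    exact ⟨smul_rootVec_add_smul_one_dotProduct_rootVec hω a c,
      smul_rootVec_add_smul_one_dotProduct_rootVec hθ b c, rfl⟩
  · rintro ⟨hx, hy, hxy⟩
    refine ⟨_, ⅟3 * y ⬝ᵥ rootVec (θ ^ 2), _, (eq_smul_rootVec_add_smul_one hω hx).symm, ?_⟩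
    rw [hxy]
    exact (eq_smul_rootVec_add_smul_one hθ hy).symm

variable [NeZero d]

lemma card_rootVec_fiber (hθ : 1 + θ + θ ^ 2 = 0) (s : ZMod d) :
    #{y : F3 d | y ⬝ᵥ rootVec θ = 0 ∧ y ⬝ᵥ one3 d = s} = d := by
  have hfiber : ({y : F3 d | y ⬝ᵥ rootVec θ = 0 ∧ y ⬝ᵥ one3 d = s} : Finset (F3 d)) =
      univ.image fun a : ZMod d => a • rootVec θ + (⅟3 * s) • one3 d := by
    ext y
    simp only [mem_filter, mem_univ, true_and, mem_image]
    constructor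
    · rintro ⟨hy, rfl⟩
      exact ⟨_, (eq_smul_rootVec_add_smul_one hθ hy).symm⟩
    · rintro ⟨a, rfl⟩
      refine ⟨smul_rootVec_add_smul_one_dotProduct_rootVec hθ _ _, ?_⟩
      rw [smul_rootVec_add_smul_one_dotProduct_one hθ, ← mul_assoc, mul_invOf_self, one_mul]
  have hinj : Function.Injective fun a : ZMod d => a • rootVec θ + (⅟3 * s) • one3 d :=
    fun a b hab => by simpa [rootVec] using congrFun hab 0
  rw [hfiber, card_image_of_injective _ hinj, card_univ, ZMod.card]

lemma card_rootVec_sq_fiber (hθ : 1 + θ + θ ^ 2 = 0) (s : ZMod d) :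
    #{y : F3 d | y ⬝ᵥ rootVec θ = 0 ∧ y ⬝ᵥ rootVec (θ ^ 2) = 0 ∧ y ⬝ᵥ one3 d = s} = 1 := by
  rw [card_eq_one]
  refine ⟨(⅟3 * s) • one3 d, ?_⟩
  ext y
  simp only [mem_filter, mem_univ, true_and, mem_singleton]
  constructor
  · rintro ⟨hy, hy', rfl⟩
    have hdecomp := eq_smul_rootVec_add_smul_one hθ hy
    rwa [hy', mul_zero, zero_smul, zero_add] at hdecomp
  · rintro rfl
    have h3 : (3 : ZMod d) * ⅟3 = 1 := mul_invOf_self _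
    simp only [dotProduct_rootVec, dotProduct_one3, Pi.smul_apply, smul_eq_mul, one3_apply]
    exact ⟨by linear_combination ⅟3 * s * hθ,
      by linear_combination ⅟3 * s * cyclotomic_sq_of_cyclotomic hθ, by linear_combination s * h3⟩

lemma card_rootLagrangian_comp (hω : 1 + ω + ω ^ 2 = 0) (hθ : 1 + θ + θ ^ 2 = 0)
    (hκ : 1 + κ + κ ^ 2 = 0) (hμ : 1 + μ + μ ^ 2 = 0) (x z : F3 d) :
    #{y | (x, y) ∈ rootLagrangian ω θ ∧ (y, z) ∈ rootLagrangian κ μ} =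
      if (x, z) ∈ rootLagrangian ω μ then
        #{y : F3 d | y ⬝ᵥ rootVec θ = 0 ∧ y ⬝ᵥ rootVec κ = 0 ∧ y ⬝ᵥ one3 d = x ⬝ᵥ one3 d}
      else 0 := by
  simp only [mem_rootLagrangian_iff hω hθ, mem_rootLagrangian_iff hκ hμ,
    mem_rootLagrangian_iff hω hμ]
  split_ifs with hxz
  · obtain ⟨hx, hz, hxz⟩ := hxz
    congr 1
    refine filter_congr fun y _ => ⟨?_, ?_⟩
    · rintro ⟨⟨-, hyθ, hxy⟩, hyκ, -, -⟩
      exact ⟨hyθ, hyκ, hxy.symm⟩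
    · rintro ⟨hyθ, hyκ, hyx⟩
      exact ⟨⟨hx, hyθ, hyx.symm⟩, hyκ, hz, hyx.trans hxz⟩
  · rw [card_eq_zero, filter_eq_empty_iff]
    rintro y - ⟨⟨hx, -, hxy⟩, -, hz, hyz⟩
    exact hxz ⟨hx, hz, hxy.trans hyz⟩

lemma Rn_rootLagrangian_mul_self (n : ℕ) (hω : 1 + ω + ω ^ 2 = 0) (hθ : 1 + θ + θ ^ 2 = 0)
    (hμ : 1 + μ + μ ^ 2 = 0) :
    Rn d n (rootLagrangian ω θ) * Rn d n (rootLagrangian θ μ) =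
      ((d : ℂ) ^ n) • Rn d n (rootLagrangian ω μ) :=
  Rn_mul_Rn d fun x z => by
    rw [card_rootLagrangian_comp hω hθ hθ hμ]
    simp only [and_self_left, card_rootVec_fiber hθ]

lemma Rn_rootLagrangian_mul_sq (n : ℕ) (hω : 1 + ω + ω ^ 2 = 0) (hθ : 1 + θ + θ ^ 2 = 0)
    (hμ : 1 + μ + μ ^ 2 = 0) :
    Rn d n (rootLagrangian ω θ) * Rn d n (rootLagrangian (θ ^ 2) μ) =
      Rn d n (rootLagrangian ω μ) := by
  simpa using Rn_mul_Rn 1 fun x z => by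
    rw [card_rootLagrangian_comp hω hθ (cyclotomic_sq_of_cyclotomic hθ) hμ,
      card_rootVec_sq_fiber hθ]

end CubeRoot

lemma three_ne_zero_of_mod_three_eq_one {d : ℕ} (h1 : 1 < d) (hmod : d % 3 = 1) :
    (3 : ZMod d) ≠ 0 := by
  intro h
  have hdvd : d ∣ 3 := (ZMod.natCast_eq_zero_iff 3 d).1 (by exact_mod_cast h)
  have := Nat.le_of_dvd (by norm_num) hdvd
  omega

lemma Td1_eq_rootLagrangian {d : ℕ} {ξ : ZMod d} (hξ : ξ ^ 3 = 1) (i j : Fin 2) :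
    Td1 d ξ i j = rootLagrangian (ξ ^ (i.val + 1)) (ξ ^ (j.val + 1)) := by
  have hg : ∀ i : Fin 2,
      (if i = 0 then ![1, ξ, ξ ^ 2] else ![1, ξ ^ 2, ξ]) = rootVec (ξ ^ (i.val + 1)) := by
    intro i
    fin_cases i
    · simp [rootVec]
    · show ![1, ξ ^ 2, ξ] = ![1, ξ ^ 2, (ξ ^ 2) ^ 2]
      rw [show (ξ ^ 2) ^ 2 = ξ by linear_combination ξ * hξ]
  simp only [Td1, hg, rootLagrangian]

lemma pow_succ_eq_sq_of_ne {d : ℕ} {ξ : ZMod d} (hξ : ξ ^ 3 = 1) {j k : Fin 2} (h : j ≠ k) :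
    ξ ^ (k.val + 1) = (ξ ^ (j.val + 1)) ^ 2 := by
  fin_cases j <;> fin_cases k
  · exact absurd rfl h
  · show ξ ^ (1 + 1) = (ξ ^ (0 + 1)) ^ 2
    ring
  · show ξ ^ (0 + 1) = (ξ ^ (1 + 1)) ^ 2
    linear_combination (-ξ) * hξ
  · exact absurd rfl h

theorem stmt13_general (d : ℕ) [NeZero d] (hd : d.Prime) (n : ℕ) :
    (d = 3 → ∀ i j : Fin 2,
      (Rn d n (Td3 d i)).conjTranspose = Rn d n (Td3 d i) ∧
      Rn d n (Td3 d i) * Rn d n (Td3 d j) = ((3 : ℂ) ^ n) • Rn d n (Td3 d (i + j))) ∧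
    (d % 3 = 1 → ∀ ξ : ZMod d, orderOf ξ = 3 → ∀ i j k l : Fin 2,
      (Rn d n (Td1 d ξ i j)).conjTranspose = Rn d n (Td1 d ξ j i) ∧
      Rn d n (Td1 d ξ i j) * Rn d n (Td1 d ξ k l) =
        (if j = k then ((d : ℂ) ^ n) else 1) • Rn d n (Td1 d ξ i l)) := by
  refine ⟨?_, ?_⟩
  · rintro rfl i j
    refine ⟨conjTranspose_Rn fun x y => ?_, ?_⟩
    · rw [mem_Td3_iff, mem_Td3_iff, Td3Rel_comm]
    · exact_mod_cast Rn_mul_Rn 3 fun x z => by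
        simpa only [mem_Td3_iff] using card_Td3Rel_comp i j x z
  · intro hmod ξ hξ i j k l
    have : Fact d.Prime := ⟨hd⟩
    have hprim : IsPrimitiveRoot ξ 3 := hξ ▸ IsPrimitiveRoot.orderOf ξ
    have hsum : 1 + ξ + ξ ^ 2 = 0 := by
      simpa [Finset.sum_range_succ] using hprim.geom_sum_eq_zero (by norm_num)
    have : Invertible (3 : ZMod d) :=
      invertibleOfNonzero (three_ne_zero_of_mod_three_eq_one hd.one_lt hmod)
    have hroot : ∀ i : Fin 2, 1 + ξ ^ (i.val + 1) + (ξ ^ (i.val + 1)) ^ 2 = 0 := by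
      intro i
      fin_cases i
      · simpa using hsum
      · exact cyclotomic_sq_of_cyclotomic hsum
    simp only [Td1_eq_rootLagrangian hprim.pow_eq_one]
    refine ⟨conjTranspose_Rn fun x y => mem_rootLagrangian_swap, ?_⟩
    rcases eq_or_ne j k with rfl | hjk
    · rw [if_pos rfl, Rn_rootLagrangian_mul_self n (hroot i) (hroot j) (hroot l)]
    · rw [if_neg hjk, one_smul, pow_succ_eq_sq_of_ne hprim.pow_eq_one hjk,
        Rn_rootLagrangian_mul_sq n (hroot i) (hroot j) (hroot l)]

theorem stmt13 (d : ℕ) [NeZero d] (hd : d.Prime) (hodd : Odd d) (n : ℕ) (hn : 1 ≤ n) :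
    (d = 3 → ∀ i j : Fin 2,
      (Rn d n (Td3 d i)).conjTranspose = Rn d n (Td3 d i) ∧
      Rn d n (Td3 d i) * Rn d n (Td3 d j) = ((3 : ℂ) ^ n) • Rn d n (Td3 d (i + j))) ∧
    (d % 3 = 1 → ∀ ξ : ZMod d, orderOf ξ = 3 → ∀ i j k l : Fin 2,
      (Rn d n (Td1 d ξ i j)).conjTranspose = Rn d n (Td1 d ξ j i) ∧
      Rn d n (Td1 d ξ i j) * Rn d n (Td1 d ξ k l) =
        (if j = k then ((d : ℂ) ^ n) else 1) • Rn d n (Td1 d ξ i l)) :=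
  stmt13_general d hd n
end
end
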